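/- arXiv:1101.4856 — 7 statements merged into one kernel-verified Lean document; each statement's English description precedes it below -/
import Mathlib

section
/- Kemperman's formula: let (S_n) be a simple random walk on ℤ started at ℓ ≥ 0, and let T = inf{n ≥ 0 : S_n = −1}. Then for every integer n ≥ 1, P_ℓ(T = n) = ((ℓ+1)/n) · P_ℓ(S_n = −1). -/
/-!
Both events depend only on the first `n` steps, whose vector is uniform on `{±1}ⁿ`, so it
suffices to show `n · #{first-passage paths from ℓ to -1} = (ℓ + 1) · #{paths from ℓ to -1}`.
Count the pairs `(s, k)` of a path `s` from `ℓ` to `-1` and a cyclic rotation `k` turning it into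
a first-passage path: rotating by `k` is a bijection, which gives `n · #{first-passage paths}`,
while by the cycle lemma every `s` has exactly `ℓ + 1` good rotations. Rotating by `k` is good
iff `k + n` is a strict descending ladder time of the periodically continued walk, which drops
by `ℓ + 1` per period; as the walk cannot skip a level downwards, the ladder times in `[n, 2n)`
are the first visits to the `ℓ + 1` levels just below the minimum over the first period.
-/

open Finset MeasureTheory ProbabilityTheory
open scoped ENNReal

namespace Kemperman

section SkipFree

variable {g : ℕ → ℤ}

lemma exists_first_hit (hg : ∀ i, g i - 1 ≤ g (i + 1)) {a : ℤ} {m : ℕ} (h0 : a < g 0)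
    (hm : g m ≤ a) : ∃ j ≤ m, g j = a ∧ ∀ i < j, a < g i := by
  have hex : ∃ j, g j ≤ a := ⟨m, hm⟩
  have hbefore : ∀ i < Nat.find hex, a < g i := fun i hi => not_le.1 (Nat.find_min hex hi)
  have hfind : g (Nat.find hex) ≤ a := Nat.find_spec hex
  obtain ⟨j, hj⟩ : ∃ j, Nat.find hex = j + 1 :=
    Nat.exists_eq_add_one_of_ne_zero fun h => by rw [h] at hfind; omega
  refine ⟨Nat.find hex, Nat.find_min' hex hm, ?_, hbefore⟩
  have hprev := hbefore j (by omega)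
  have hstep := hg j
  rw [hj] at hfind ⊢
  omega

def IsLadderTime (g : ℕ → ℤ) (j : ℕ) : Prop := ∀ i < j, g j < g i

instance : DecidablePred (IsLadderTime g) := fun _ => Nat.decidableBallLT _ _

end SkipFree

section CycleLemma

def partialSum (b : ℕ → ℤ) (m : ℕ) : ℤ := ∑ i ∈ range m, b i

variable {n ℓ : ℕ} {b : ℕ → ℤ}

lemma partialSum_add (b : ℕ → ℤ) (k m : ℕ) :
    partialSum b (k + m) = partialSum b k + ∑ i ∈ range m, b (k + i) :=
  sum_range_add b k m

lemma partialSum_sub_one_le (hb : ∀ i, -1 ≤ b i) (m : ℕ) :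
    partialSum b m - 1 ≤ partialSum b (m + 1) := by
  have := hb m
  simp only [partialSum, sum_range_succ]
  omega

lemma partialSum_add_period (hper : Function.Periodic b n) (hsum : partialSum b n = -(ℓ + 1))
    (m : ℕ) : partialSum b (m + n) = partialSum b m - (ℓ + 1) := by
  have hshift : ∑ i ∈ range m, b (n + i) = partialSum b m :=
    sum_congr rfl fun i _ => by rw [add_comm]; exact hper i
  rw [add_comm, partialSum_add, hsum, hshift]
  ring

/-- Going below `-1` forces a visit to `-1` since steps are `≥ -1`; periodicity handles the
times before `k`. -/
lemma avoids_iff_isLadderTime (hb : ∀ i, -1 ≤ b i) (hper : Function.Periodic b n)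
    (hsum : partialSum b n = -(ℓ + 1)) {k : ℕ} (hk : k < n) :
    (∀ m < n, (ℓ : ℤ) + ∑ i ∈ range m, b (k + i) ≠ -1) ↔
      IsLadderTime (partialSum b) (k + n) := by
  have hshift := partialSum_add_period hper hsum
  have hrestart : ∀ m, ∑ i ∈ range m, b (k + i) = partialSum b (k + m) - partialSum b k :=
    fun m => by rw [partialSum_add]; ring
  simp only [hrestart]
  constructor
  · intro havoid
    have habove : ∀ m < n, partialSum b k - (ℓ + 1) < partialSum b (k + m) := by
      intro m hm
      by_contra! hle
      obtain ⟨j, hjm, hj, -⟩ :=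
        exists_first_hit (g := fun m => ℓ + (partialSum b (k + m) - partialSum b k))
        (fun i => by have := partialSum_sub_one_le hb (k + i); simp only [← add_assoc]; omega)
        (a := -1) (m := m) (by simp only [add_zero, sub_self]; omega) (by omega)
      exact havoid j (by omega) hj
    intro i hi
    rw [hshift]
    rcases lt_or_ge i k with hik | hki
    · have h := habove (i + n - k) (by omega)
      rw [show k + (i + n - k) = i + n by omega, hshift] at h
      omega
    · have h := habove (i - k) (by omega)
      rwa [show k + (i - k) = i by omega] at h
  · intro hladder m hm
    rcases Nat.eq_zero_or_pos m with rfl | hm0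
    · simp
    · have := hladder (k + m) (by omega)
      have := hshift k
      omega

lemma card_isLadderTime_Ico (hb : ∀ i, -1 ≤ b i) (hper : Function.Periodic b n)
    (hsum : partialSum b n = -(ℓ + 1)) :
    #{j ∈ Ico n (2 * n) | IsLadderTime (partialSum b) j} = ℓ + 1 := by
  have hshift := partialSum_add_period hper hsum
  have hn : n ≠ 0 := by rintro rfl; simp [partialSum] at hsum; omega
  obtain ⟨i₀, hi₀, hmin⟩ :=
    exists_min_image (range n) (partialSum b) ⟨0, mem_range.2 (Nat.pos_of_ne_zero hn)⟩
  rw [mem_range] at hi₀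
  set μ := partialSum b i₀
  have hcard : #(Ico (μ - (ℓ + 1)) μ) = ℓ + 1 := by simp
  rw [← hcard]
  refine card_nbij (partialSum b) ?_ ?_ ?_
  · intro j hj
    simp only [coe_filter, mem_Ico, Set.mem_ofPred_eq, mem_coe] at hj ⊢
    have hbelow := hj.2 i₀ (by omega)
    have hperiod := hshift (j - n)
    have hlow := hmin (j - n) (by simp; omega)
    rw [Nat.sub_add_cancel hj.1.1] at hperiod
    omega
  · intro j₁ hj₁ j₂ hj₂ heq
    simp only [coe_filter, Set.mem_ofPred_eq] at hj₁ hj₂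
    by_contra hne
    rcases lt_or_gt_of_ne hne with h | h
    · exact absurd heq (hj₂.2 j₁ h).ne'
    · exact absurd heq (hj₁.2 j₂ h).ne
  · intro a ha
    simp only [coe_Ico, Set.mem_Ico] at ha
    have h0 := hmin 0 (mem_range.2 (Nat.pos_of_ne_zero hn))
    obtain ⟨j, hj, rfl, hbefore⟩ :=
      exists_first_hit (partialSum_sub_one_le hb) (a := a) (m := i₀ + n)
        (by simp [partialSum] at h0 ⊢; omega) (by rw [hshift]; omega)
    have hjn : n ≤ j := by
      by_contra! hjn
      have := hmin j (by simpa using hjn)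
      omega
    exact ⟨j, mem_filter.2 ⟨mem_Ico.2 ⟨hjn, by omega⟩, hbefore⟩, rfl⟩

/-- The cycle lemma of Dvoretzky and Motzkin. -/
theorem card_filter_avoids (hb : ∀ i, -1 ≤ b i) (hper : Function.Periodic b n)
    (hsum : partialSum b n = -(ℓ + 1)) :
    #{k ∈ range n | ∀ m < n, (ℓ : ℤ) + ∑ i ∈ range m, b (k + i) ≠ -1} = ℓ + 1 := by
  rw [← card_isLadderTime_Ico hb hper hsum]
  refine card_nbij (· + n) ?_ (fun _ _ _ _ => Nat.add_right_cancel) ?_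
  · intro k hk
    simp only [coe_filter, mem_range, Set.mem_ofPred_eq, mem_Ico] at hk ⊢
    exact ⟨⟨by omega, by omega⟩, (avoids_iff_isLadderTime hb hper hsum hk.1).1 hk.2⟩
  · intro j hj
    simp only [coe_filter, mem_Ico, Set.mem_ofPred_eq] at hj
    refine ⟨j - n, ?_, Nat.sub_add_cancel hj.1.1⟩
    simp only [coe_filter, mem_range, Set.mem_ofPred_eq]
    refine ⟨by omega, (avoids_iff_isLadderTime hb hper hsum (by omega)).2 ?_⟩
    rw [Nat.sub_add_cancel hj.1.1]
    exact hj.2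

end CycleLemma

def signVectors (n : ℕ) : Finset (Fin n → ℤ) := Fintype.piFinset fun _ => {1, -1}

lemma mem_signVectors {n : ℕ} {s : Fin n → ℤ} : s ∈ signVectors n ↔ ∀ i, s i = 1 ∨ s i = -1 := by
  simp [signVectors]

section Rotation

variable {n : ℕ} {ℓ : ℕ}

variable (ℓ) in
def HitsAtEnd (s : Fin n → ℤ) : Prop := (ℓ : ℤ) + ∑ i, s i = -1

instance : DecidablePred (HitsAtEnd (n := n) ℓ) := fun _ => Int.decEq _ _

lemma hitsAtEnd_restrict (x : ℕ → ℤ) :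
    HitsAtEnd ℓ (fun i : Fin n => x i) ↔ (ℓ : ℤ) + ∑ i ∈ range n, x i = -1 := by
  rw [HitsAtEnd, Fin.sum_univ_eq_sum_range x]

def rotate (k : Fin n) (s : Fin n → ℤ) : Fin n → ℤ := fun i => s (i + k)

lemma rotate_mem_signVectors (k : Fin n) {s : Fin n → ℤ} (hs : s ∈ signVectors n) :
    rotate k s ∈ signVectors n :=
  mem_signVectors.2 fun i => mem_signVectors.1 hs (i + k)

variable [NeZero n]

lemma rotate_neg_rotate (k : Fin n) (s : Fin n → ℤ) : rotate k (rotate (-k) s) = s := by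
  funext i
  simp [rotate]

lemma hitsAtEnd_rotate (k : Fin n) (s : Fin n → ℤ) :
    HitsAtEnd ℓ (rotate k s) ↔ HitsAtEnd ℓ s := by
  unfold HitsAtEnd rotate
  rw [show ∑ i, s (i + k) = ∑ i, s i from Equiv.sum_comp (Equiv.addRight k) s]

open Fin.NatCast

variable (ℓ) in
/-- Here `s i` with `i : ℕ` is `s (i mod n)`; only `i < n` occurs. -/
def FirstHitsAtEnd (s : Fin n → ℤ) : Prop :=
  HitsAtEnd ℓ s ∧ ∀ m < n, (ℓ : ℤ) + ∑ i ∈ range m, s i ≠ -1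

instance : DecidablePred (FirstHitsAtEnd (n := n) ℓ) := fun _ => instDecidableAnd

lemma rotate_apply_natCast (k : Fin n) (s : Fin n → ℤ) (i : ℕ) :
    rotate k s i = s ((k + i : ℕ) : Fin n) := by
  rw [rotate, Nat.cast_add, Fin.cast_val_eq_self, add_comm]

lemma firstHitsAtEnd_restrict (x : ℕ → ℤ) :
    FirstHitsAtEnd ℓ (fun i : Fin n => x i) ↔
      (ℓ : ℤ) + ∑ i ∈ range n, x i = -1 ∧ ∀ m < n, (ℓ : ℤ) + ∑ i ∈ range m, x i ≠ -1 := by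
  refine and_congr (hitsAtEnd_restrict x) (forall₂_congr fun m hm => ?_)
  have hsum : ∑ i ∈ range m, x ((i : Fin n) : ℕ) = ∑ i ∈ range m, x i :=
    sum_congr rfl fun i hi => by rw [Fin.val_natCast, Nat.mod_eq_of_lt (by simp at hi; omega)]
  rw [hsum]

lemma card_filter_firstHitsAtEnd_rotate {s : Fin n → ℤ} (hs : ∀ i, -1 ≤ s i)
    (hhit : HitsAtEnd ℓ s) : #{k | FirstHitsAtEnd ℓ (rotate k s)} = ℓ + 1 := by
  set b : ℕ → ℤ := fun j => s j
  have hper : Function.Periodic b n := fun j => by simp [b]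
  have hsum : partialSum b n = -(ℓ + 1) := by
    have := Fin.sum_univ_eq_sum_range b n
    simp only [b, Fin.cast_val_eq_self] at this
    rw [HitsAtEnd] at hhit
    rw [partialSum, ← this]
    omega
  have hrot : ∀ k : Fin n, FirstHitsAtEnd ℓ (rotate k s) ↔
      ∀ m < n, (ℓ : ℤ) + ∑ i ∈ range m, b (k + i) ≠ -1 := fun k => by
    simp only [FirstHitsAtEnd, hitsAtEnd_rotate, hhit, true_and, rotate_apply_natCast, b]
  calc #{k | FirstHitsAtEnd ℓ (rotate k s)}
      = ∑ k : Fin n, if ∀ m < n, (ℓ : ℤ) + ∑ i ∈ range m, b (k + i) ≠ -1 then 1 else 0 := by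
        rw [card_filter]; simp only [hrot]
    _ = #{k ∈ range n | ∀ m < n, (ℓ : ℤ) + ∑ i ∈ range m, b (k + i) ≠ -1} := by
        rw [card_filter, Fin.sum_univ_eq_sum_range
          (fun k => if ∀ m < n, (ℓ : ℤ) + ∑ i ∈ range m, b (k + i) ≠ -1 then 1 else 0)]
    _ = ℓ + 1 := card_filter_avoids (fun i => hs i) hper hsum

theorem mul_card_firstHitsAtEnd :
    n * #{s ∈ signVectors n | FirstHitsAtEnd ℓ s} =
      (ℓ + 1) * #{s ∈ signVectors n | HitsAtEnd ℓ s} := by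
  have hdouble := card_mul_eq_card_mul (s := (univ : Finset (Fin n)))
    (t := {s ∈ signVectors n | HitsAtEnd ℓ s}) (fun k s => FirstHitsAtEnd ℓ (rotate k s))
    (m := #{s ∈ signVectors n | FirstHitsAtEnd ℓ s}) (n := ℓ + 1) ?_ ?_
  · rw [card_univ, Fintype.card_fin] at hdouble
    rw [hdouble, mul_comm]
  · intro k _
    refine card_nbij' (rotate k) (rotate (-k)) ?_ ?_ ?_ ?_
    · intro s hs
      simp only [bipartiteAbove, coe_filter, mem_filter, Set.mem_ofPred_eq] at hs ⊢
      exact ⟨rotate_mem_signVectors k hs.1.1, hs.2⟩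
    · intro s hs
      simp only [bipartiteAbove, coe_filter, mem_filter, Set.mem_ofPred_eq] at hs ⊢
      refine ⟨⟨rotate_mem_signVectors (-k) hs.1, ?_⟩, by rw [rotate_neg_rotate]; exact hs.2⟩
      exact (hitsAtEnd_rotate (-k) s).2 hs.2.1
    · intro s _
      simpa using rotate_neg_rotate (-k) s
    · intro s _
      exact rotate_neg_rotate k s
  · intro s hs
    simp only [mem_filter] at hs
    exact card_filter_firstHitsAtEnd_rotate
      (fun i => by rcases mem_signVectors.1 hs.1 i with h | h <;> omega) hs.2

end Rotation

section Probability

variable {Ω : Type*} [MeasurableSpace Ω] {P : Measure Ω} {X : ℕ → Ω → ℤ}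

def stepVector (X : ℕ → Ω → ℤ) (n : ℕ) (ω : Ω) : Fin n → ℤ := fun i => X i ω

lemma measure_stepVector_preimage_singleton (hindep : iIndepFun X P)
    (hup : ∀ i, P {ω | X i ω = 1} = 1 / 2) (hdown : ∀ i, P {ω | X i ω = -1} = 1 / 2)
    {n : ℕ} {s : Fin n → ℤ} (hs : s ∈ signVectors n) :
    P (stepVector X n ⁻¹' {s}) = (1 / 2) ^ n := by
  have hcyl : stepVector X n ⁻¹' {s} = ⋂ i ∈ (univ : Finset (Fin n)), X i ⁻¹' {s i} := by
    ext ω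
    simp [stepVector, funext_iff]
  rw [hcyl, (hindep.precomp Fin.val_injective).measure_inter_preimage_eq_mul univ
    fun i _ => measurableSet_singleton (s i)]
  refine (prod_congr rfl fun i _ => ?_).trans (Fin.prod_const n _)
  rcases mem_signVectors.1 hs i with h | h <;> rw [h]
  · exact hup i
  · exact hdown i

variable [IsProbabilityMeasure P]

lemma measure_setOf_stepVector (hmeas : ∀ i, Measurable (X i)) (hindep : iIndepFun X P)
    (hup : ∀ i, P {ω | X i ω = 1} = 1 / 2) (hdown : ∀ i, P {ω | X i ω = -1} = 1 / 2)
    (n : ℕ) (p : (Fin n → ℤ) → Prop) [DecidablePred p] :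
    P {ω | p (stepVector X n ω)} = #{s ∈ signVectors n | p s} * (1 / 2) ^ n := by
  have hvec : Measurable (stepVector X n) := measurable_pi_lambda _ fun i => hmeas i
  have hfiber : ∀ s : Fin n → ℤ, MeasurableSet (stepVector X n ⁻¹' {s}) :=
    fun s => hvec (measurableSet_singleton s)
  have hsum : ∀ A ⊆ signVectors n, P (stepVector X n ⁻¹' A) = #A * (1 / 2) ^ n := fun A hA => by
    rw [← sum_measure_preimage_singleton A fun s _ => hfiber s, ← nsmul_eq_mul, ← sum_const]
    exact sum_congr rfl fun s hs =>
      measure_stepVector_preimage_singleton hindep hup hdown (hA hs)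
  have hfull : P (stepVector X n ⁻¹' (signVectors n : Set (Fin n → ℤ))) = 1 := by
    rw [hsum _ subset_rfl, signVectors, Fintype.card_piFinset]
    simp [← mul_pow, ENNReal.mul_inv_cancel]
  have hnull : P (stepVector X n ⁻¹' (signVectors n : Set (Fin n → ℤ)))ᶜ = 0 :=
    (prob_compl_eq_zero_iff (hvec (signVectors n).measurableSet)).2 hfull
  rw [← hsum _ (filter_subset p _), coe_filter, ← measure_inter_conull hnull]
  congr 1
  ext ω
  simp [and_comm]

end Probability

end Kemperman

open Kemperman

/-- Kemperman's formula: if `S` is a simple random walk started at `ℓ ≥ 0` and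
`T = inf{n ≥ 0 : S n = -1}`, then for every `n ≥ 1`,
`P(T = n) = ((ℓ+1)/n) · P(S n = -1)`. The event `{T = n}` is written as
`{S n = -1 and S m ≠ -1 for all m < n}`. -/
theorem kemperman_formula
    {Ω : Type} [MeasurableSpace Ω] (P : Measure Ω) [IsProbabilityMeasure P]
    (X : ℕ → Ω → ℤ) (hmeas : ∀ i, Measurable (X i))
    (hindep : iIndepFun X P)
    (hup : ∀ i, P {ω | X i ω = 1} = 1 / 2)
    (hdown : ∀ i, P {ω | X i ω = -1} = 1 / 2)
    (ℓ : ℕ) (S : ℕ → Ω → ℤ)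
    (hS : ∀ n ω, S n ω = (ℓ : ℤ) + ∑ i ∈ Finset.range n, X i ω)
    (n : ℕ) (hn : 1 ≤ n) :
    P {ω | S n ω = -1 ∧ ∀ m < n, S m ω ≠ -1}
      = (((ℓ : ℝ≥0∞) + 1) / (n : ℝ≥0∞)) * P {ω | S n ω = -1} := by
  have : NeZero n := ⟨by omega⟩
  have hfirst : {ω | S n ω = -1 ∧ ∀ m < n, S m ω ≠ -1} =
      {ω | FirstHitsAtEnd ℓ (stepVector X n ω)} := by
    ext ω
    simp only [Set.mem_ofPred_eq, hS]
    exact (firstHitsAtEnd_restrict fun i => X i ω).symm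
  have hhit : {ω | S n ω = -1} = {ω | HitsAtEnd ℓ (stepVector X n ω)} := by
    ext ω
    simp only [Set.mem_ofPred_eq, hS]
    exact (hitsAtEnd_restrict fun i => X i ω).symm
  have hcount : (n : ℝ≥0∞) * #{s ∈ signVectors n | FirstHitsAtEnd ℓ s} =
      (ℓ + 1) * #{s ∈ signVectors n | HitsAtEnd ℓ s} := by
    exact_mod_cast mul_card_firstHitsAtEnd
  rw [hfirst, hhit, measure_setOf_stepVector hmeas hindep hup hdown,
    measure_setOf_stepVector hmeas hindep hup hdown,
    (ENNReal.eq_div_iff (by simp; omega) (ENNReal.natCast_ne_top n)).2 hcount]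
  simp only [div_eq_mul_inv]
  ring
end

section
/- Cyclic shift invariance of Dyck paths: for every Dyck path (x_0, ..., x_{2k}) and every i ∈ {0, ..., 2k−1}, the sequence defined by x_j^{(i)} = x_i + x_{i⊕j} − 2·min_{i∧(i⊕j) ≤ n ≤ i∨(i⊕j)} x_n (where i⊕j = i+j if i+j ≤ 2k and i+j−2k otherwise) is again a Dyck path of length 2k, and the map Φ_i sending (x_j) to (x_j^{(i)}) is a bijection of the set of Dyck paths of length 2k onto itself, with Φ_{2k−i} ∘ Φ_i equal to the identity. -/
/-- The cyclic index `i ⊕ j`: equal to `i + j` if `i + j ≤ 2k`, and to `i + j - 2k` otherwise. -/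
def oplus (k i j : ℕ) : ℕ := if i + j ≤ 2 * k then i + j else i + j - 2 * k

/-- Dyck paths of length `2k`, encoded as functions `ℕ → ℕ` vanishing from time `2k` on:
`x 0 = 0`, `x (2k) = 0`, and `|x (j+1) - x j| = 1` for `j < 2k`. -/
def DyckSet (k : ℕ) : Set (ℕ → ℕ) :=
  {x | x 0 = 0 ∧ x (2 * k) = 0 ∧
    (∀ j < 2 * k, x (j + 1) = x j + 1 ∨ x j = x (j + 1) + 1) ∧
    ∀ j, 2 * k ≤ j → x j = 0}

/-- The cyclic shift `Φ_i` of a Dyck path: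
`x_j^{(i)} = x_i + x_{i⊕j} - 2 min_{i∧(i⊕j) ≤ n ≤ i∨(i⊕j)} x_n`. -/
def dyckShift (k i : ℕ) (x : ℕ → ℕ) : ℕ → ℕ := fun j =>
  if j ≤ 2 * k then
    x i + x (oplus k i j) -
      2 * (Finset.Icc (min i (oplus k i j)) (max i (oplus k i j))).inf'
        (Finset.nonempty_Icc.mpr min_le_max) x
  else 0

/-!
A Dyck path is the contour of a plane tree, and `x a + x b - 2 min_{[a,b]} x` is the distance in
that tree between the vertices visited at times `a` and `b`. So `Φ_i` is the contour of the same
tree rerooted at the vertex visited at time `i`. Analytically: this distance changes by exactly one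
when `b` takes a step, so `Φ_i x` is a Dyck path; and the minimum of `Φ_i x` between `2k - i` and
any other time is `x i` minus the minimum of `x` over the corresponding interval, being attained
at the first or last visit of `x` to that level. This gives `Φ_{2k-i} ∘ Φ_i = id`, and since
`2k - (2k - i) = i`, the two shifts are mutually inverse bijections.
-/

def intervalMin (x : ℕ → ℕ) (a b : ℕ) : ℕ :=
  (Finset.Icc (min a b) (max a b)).inf' (Finset.nonempty_Icc.mpr min_le_max) x

def treeDist (x : ℕ → ℕ) (a b : ℕ) : ℕ :=
  x a + x b - 2 * intervalMin x a b

section intervalMin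

variable {x : ℕ → ℕ} {a b c v : ℕ}

theorem intervalMin_le (h₁ : min a b ≤ c) (h₂ : c ≤ max a b) : intervalMin x a b ≤ x c :=
  Finset.inf'_le _ (Finset.mem_Icc.mpr ⟨h₁, h₂⟩)

theorem intervalMin_le_left : intervalMin x a b ≤ x a :=
  intervalMin_le (min_le_left a b) (le_max_left a b)

theorem intervalMin_le_right : intervalMin x a b ≤ x b :=
  intervalMin_le (min_le_right a b) (le_max_right a b)

theorem le_intervalMin (h : ∀ c, min a b ≤ c → c ≤ max a b → v ≤ x c) : v ≤ intervalMin x a b :=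
  Finset.le_inf' _ _ fun c hc => h c (Finset.mem_Icc.mp hc).1 (Finset.mem_Icc.mp hc).2

theorem intervalMin_comm (x : ℕ → ℕ) (a b : ℕ) : intervalMin x a b = intervalMin x b a := by
  simp only [intervalMin, min_comm, max_comm]

theorem intervalMin_self (x : ℕ → ℕ) (a : ℕ) : intervalMin x a a = x a := by
  simp [intervalMin]

theorem intervalMin_split (hab : a ≤ b) (hbc : b ≤ c) :
    intervalMin x a c = min (intervalMin x a b) (intervalMin x b c) := by
  refine le_antisymm (le_min ?_ ?_) (le_intervalMin fun d hd₁ hd₂ => ?_)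
  · exact le_intervalMin fun d _ _ => intervalMin_le (by omega) (by omega)
  · exact le_intervalMin fun d _ _ => intervalMin_le (by omega) (by omega)
  · rcases le_total d b with hdb | hbd
    · exact (min_le_left _ _).trans (intervalMin_le (by omega) (by omega))
    · exact (min_le_right _ _).trans (intervalMin_le (by omega) (by omega))

theorem intervalMin_succ (x : ℕ → ℕ) (a : ℕ) : intervalMin x a (a + 1) = min (x a) (x (a + 1)) :=
  le_antisymm (le_min intervalMin_le_left intervalMin_le_right) <| le_intervalMin fun c h₁ h₂ => by
    rcases (show c = a ∨ c = a + 1 by omega) with rfl | rfl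
    · exact min_le_left _ _
    · exact min_le_right _ _

theorem intervalMin_eq_zero (hb : x b = 0) : intervalMin x a b = 0 :=
  Nat.eq_zero_of_le_zero (hb ▸ intervalMin_le_right)

theorem exists_last_visit (hab : a ≤ b) (hstep : ∀ c, a ≤ c → c < b → x (c + 1) ≤ x c + 1)
    (ha : x a ≤ v) (hb : v ≤ x b) : ∃ t, a ≤ t ∧ t ≤ b ∧ x t = v ∧ v ≤ intervalMin x t b := by
  induction b, hab using Nat.le_induction with
  | base => exact ⟨a, le_rfl, le_rfl, by omega, by rw [intervalMin_self]; omega⟩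
  | succ b hab ih =>
    by_cases hb' : x (b + 1) ≤ v
    · exact ⟨b + 1, by omega, le_rfl, by omega, by rw [intervalMin_self]; omega⟩
    have := hstep b hab (by omega)
    obtain ⟨t, hat, htb, hxt, hvt⟩ :=
      ih (fun c h₁ h₂ => hstep c h₁ (by omega)) (by omega)
    refine ⟨t, hat, by omega, hxt, le_intervalMin fun c hc₁ hc₂ => ?_⟩
    rcases le_or_gt c b with hcb | hcb
    · exact hvt.trans (intervalMin_le (by omega) (by omega))
    · rwa [show c = b + 1 by omega]

theorem exists_first_visit (hab : a ≤ b) (hstep : ∀ c, a ≤ c → c < b → x c ≤ x (c + 1) + 1)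
    (ha : v ≤ x a) (hb : x b ≤ v) : ∃ u, a ≤ u ∧ u ≤ b ∧ x u = v ∧ v ≤ intervalMin x a u := by
  obtain ⟨d, rfl⟩ := Nat.exists_eq_add_of_le hab
  clear hab
  induction d generalizing a with
  | zero =>
    rw [Nat.add_zero] at hb
    exact ⟨a, le_rfl, by omega, by omega, by rw [intervalMin_self]; omega⟩
  | succ d ih =>
    by_cases ha' : x a ≤ v
    · exact ⟨a, le_rfl, by omega, by omega, by rw [intervalMin_self]; omega⟩
    have := hstep a le_rfl (by omega)
    obtain ⟨u, hau, hub, hxu, hvu⟩ :=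
      ih (a := a + 1) (by omega) (fun c h₁ h₂ => hstep c (by omega) (by omega))
        (by rwa [show a + 1 + d = a + (d + 1) by omega])
    refine ⟨u, by omega, by omega, hxu, le_intervalMin fun c hc₁ hc₂ => ?_⟩
    rcases le_or_gt c a with hca | hca
    · rwa [show c = a by omega]
    · exact hvu.trans (intervalMin_le (by omega) (by omega))

end intervalMin

section treeDist

variable {x : ℕ → ℕ} {a b : ℕ}

theorem treeDist_comm (x : ℕ → ℕ) (a b : ℕ) : treeDist x a b = treeDist x b a := by
  rw [treeDist, treeDist, intervalMin_comm, add_comm]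

theorem treeDist_self (x : ℕ → ℕ) (a : ℕ) : treeDist x a a = 0 := by
  rw [treeDist, intervalMin_self]
  omega

theorem treeDist_of_eq_zero (hb : x b = 0) : treeDist x a b = x a := by
  rw [treeDist, intervalMin_eq_zero hb, hb]
  rfl

theorem treeDist_succ_right (hstep : x (b + 1) = x b + 1 ∨ x b = x (b + 1) + 1) :
    treeDist x a (b + 1) = treeDist x a b + 1 ∨ treeDist x a b = treeDist x a (b + 1) + 1 := by
  have h₁ : intervalMin x a b ≤ x a := intervalMin_le_left
  have h₂ : intervalMin x a b ≤ x b := intervalMin_le_right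
  have h₃ : intervalMin x a (b + 1) ≤ x a := intervalMin_le_left
  have h₄ : intervalMin x a (b + 1) ≤ x (b + 1) := intervalMin_le_right
  rcases le_or_gt a b with hab | hba
  · have h := intervalMin_split (x := x) hab (Nat.le_add_right b 1)
    rw [intervalMin_succ] at h
    simp only [treeDist]
    omega
  · have h := intervalMin_split (x := x) (Nat.le_add_right b 1) hba
    rw [intervalMin_succ, intervalMin_comm x b, intervalMin_comm x (b + 1)] at h
    simp only [treeDist]
    omega

end treeDist

section dyckShift

variable {k i : ℕ} {x : ℕ → ℕ}

theorem dyckShift_apply_of_add_le {n : ℕ} (h : i + n ≤ 2 * k) :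
    dyckShift k i x n = treeDist x i (i + n) := by
  have hn : oplus k i n = i + n := if_pos h
  simp only [dyckShift, if_pos (show n ≤ 2 * k by omega), hn]
  rfl

theorem dyckShift_apply_of_two_mul_lt {n : ℕ} (h : 2 * k < n) : dyckShift k i x n = 0 :=
  if_neg (by omega)

theorem dyckShift_apply_two_mul_sub (hi : i ≤ 2 * k) (h2k : x (2 * k) = 0) :
    dyckShift k i x (2 * k - i) = x i := by
  rw [dyckShift_apply_of_add_le (by omega), Nat.add_sub_cancel' hi, treeDist_of_eq_zero h2k]

theorem dyckShift_apply_wrap {t : ℕ} (hti : t ≤ i) (hi : i ≤ 2 * k) (h0 : x 0 = 0)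
    (h2k : x (2 * k) = 0) : dyckShift k i x (2 * k - i + t) = treeDist x t i := by
  rcases Nat.eq_zero_or_pos t with rfl | ht
  · rw [Nat.add_zero, dyckShift_apply_two_mul_sub hi h2k, treeDist_comm, treeDist_of_eq_zero h0]
  · have ht' : oplus k i (2 * k - i + t) = t := by
      rw [oplus, if_neg (by omega)]
      omega
    simp only [dyckShift, if_pos (show 2 * k - i + t ≤ 2 * k by omega), ht']
    exact treeDist_comm x i t

theorem dyckShift_mem (hi : i ≤ 2 * k) (hx : x ∈ DyckSet k) : dyckShift k i x ∈ DyckSet k := by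
  obtain ⟨h0, h2k, hstep, hzero⟩ := hx
  have hend : dyckShift k i x (2 * k) = 0 := by
    rw [show 2 * k = 2 * k - i + i by omega, dyckShift_apply_wrap le_rfl hi h0 h2k, treeDist_self]
  refine ⟨?_, hend, fun j hj => ?_, fun j hj => ?_⟩
  · rw [dyckShift_apply_of_add_le (by omega), Nat.add_zero, treeDist_self]
  · rcases lt_or_ge (i + j) (2 * k) with hij | hij
    · rw [dyckShift_apply_of_add_le hij.le, dyckShift_apply_of_add_le hij, ← Nat.add_assoc]
      exact treeDist_succ_right (hstep _ hij)
    · obtain ⟨t, rfl⟩ : ∃ t, j = 2 * k - i + t := ⟨j - (2 * k - i), by omega⟩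
      rw [Nat.add_assoc, dyckShift_apply_wrap (by omega) hi h0 h2k,
        dyckShift_apply_wrap (by omega) hi h0 h2k, treeDist_comm x t, treeDist_comm x (t + 1)]
      exact treeDist_succ_right (hstep t (by omega))
  · rcases hj.eq_or_lt with rfl | hj
    · exact hend
    · exact dyckShift_apply_of_two_mul_lt hj

/-- The minimum of `Φ_i x` on `[2k - i, 2k - i + j]` is `x i - intervalMin x j i`, attained at the
last visit of `x` to that level before `j`. -/
theorem treeDist_dyckShift_of_le {j : ℕ} (hji : j ≤ i) (hi : i ≤ 2 * k) (hx : x ∈ DyckSet k) :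
    treeDist (dyckShift k i x) (2 * k - i) (2 * k - i + j) = x j := by
  obtain ⟨h0, h2k, hstep, -⟩ := hx
  set μ := intervalMin x j i
  have hμi : μ ≤ x i := intervalMin_le_right
  have hμj : μ ≤ x j := intervalMin_le_left
  have hmin : intervalMin (dyckShift k i x) (2 * k - i) (2 * k - i + j) = x i - μ := by
    refine le_antisymm ?_ (le_intervalMin fun c hc₁ hc₂ => ?_)
    · obtain ⟨t, -, htj, hxt, hμt⟩ :=
        exists_last_visit (Nat.zero_le j) (fun c _ hc => by have := hstep c (by omega); omega)
          (by omega) hμj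
      have htμ : intervalMin x t i = μ := by
        rw [intervalMin_split htj hji]
        exact min_eq_right hμt
      have := intervalMin_le (x := dyckShift k i x) (a := 2 * k - i) (b := 2 * k - i + j)
        (c := 2 * k - i + t) (by omega) (by omega)
      rw [dyckShift_apply_wrap (by omega) hi h0 h2k, treeDist, htμ, hxt] at this
      omega
    · obtain ⟨t, rfl⟩ : ∃ t, c = 2 * k - i + t := ⟨c - (2 * k - i), by omega⟩
      have htj : t ≤ j := by omega
      rw [dyckShift_apply_wrap (by omega) hi h0 h2k, treeDist]
      have h₁ : intervalMin x t i ≤ μ := by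
        rw [intervalMin_split htj hji]
        exact min_le_right _ _
      have h₂ : intervalMin x t i ≤ x t := intervalMin_le_left
      omega
  rw [treeDist, hmin, dyckShift_apply_two_mul_sub hi h2k, dyckShift_apply_wrap hji hi h0 h2k,
    treeDist]
  omega

/-- The minimum of `Φ_i x` on `[j - i, 2k - i]` is `x i - intervalMin x i j`, attained at the
first visit of `x` to that level after `j`. -/
theorem treeDist_dyckShift_of_lt {j : ℕ} (hij : i < j) (hj : j ≤ 2 * k) (hx : x ∈ DyckSet k) :
    treeDist (dyckShift k i x) (j - i) (2 * k - i) = x j := by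
  obtain ⟨-, h2k, hstep, -⟩ := hx
  set ν := intervalMin x i j
  have hνi : ν ≤ x i := intervalMin_le_left
  have hνj : ν ≤ x j := intervalMin_le_right
  have hmin : intervalMin (dyckShift k i x) (j - i) (2 * k - i) = x i - ν := by
    refine le_antisymm ?_ (le_intervalMin fun c hc₁ hc₂ => ?_)
    · obtain ⟨u, hju, hu, hxu, hνu⟩ :=
        exists_first_visit hj (fun c _ hc => by have := hstep c (by omega); omega) hνj
          (by omega)
      have huν : intervalMin x i u = ν := by
        rw [intervalMin_split hij.le hju]
        exact min_eq_left hνu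
      have := intervalMin_le (x := dyckShift k i x) (a := j - i) (b := 2 * k - i)
        (c := u - i) (by omega) (by omega)
      rw [dyckShift_apply_of_add_le (by omega), Nat.add_sub_cancel' (by omega), treeDist, huν,
        hxu] at this
      omega
    · rw [dyckShift_apply_of_add_le (by omega), treeDist]
      have h₁ : intervalMin x i (i + c) ≤ ν := by
        rw [intervalMin_split hij.le (by omega)]
        exact min_le_left _ _
      have h₂ : intervalMin x i (i + c) ≤ x (i + c) := intervalMin_le_right
      omega
  rw [treeDist, hmin, dyckShift_apply_two_mul_sub (by omega) h2k,
    dyckShift_apply_of_add_le (by omega), Nat.add_sub_cancel' hij.le, treeDist]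
  omega

theorem dyckShift_two_mul_sub_dyckShift (hi : i ≤ 2 * k) (hx : x ∈ DyckSet k) :
    dyckShift k (2 * k - i) (dyckShift k i x) = x := by
  have hy := dyckShift_mem hi hx
  funext j
  rcases le_or_gt j i with hji | hij
  · rw [dyckShift_apply_of_add_le (by omega), treeDist_dyckShift_of_le hji hi hx]
  rcases le_or_gt j (2 * k) with hj | hj
  · rw [show j = 2 * k - (2 * k - i) + (j - i) by omega,
      dyckShift_apply_wrap (by omega) (by omega) hy.1 hy.2.1, Nat.sub_sub_self hi,
      Nat.add_sub_cancel' hij.le, treeDist_dyckShift_of_lt hij hj hx]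
  · rw [dyckShift_apply_of_two_mul_lt hj, hx.2.2.2 j hj.le]

end dyckShift

/-- For every Dyck path `x` of length `2k` and every `i < 2k`, the cyclically shifted
sequence `Φ_i x` is again a Dyck path of length `2k`; the map `Φ_i` is a bijection of the
set of Dyck paths of length `2k` onto itself, and `Φ_{2k-i} ∘ Φ_i` is the identity. -/
theorem dyckShift_bijection (k i : ℕ) (hi : i < 2 * k) :
    (∀ x ∈ DyckSet k, dyckShift k i x ∈ DyckSet k) ∧
    Set.BijOn (dyckShift k i) (DyckSet k) (DyckSet k) ∧
    ∀ x ∈ DyckSet k, dyckShift k (2 * k - i) (dyckShift k i x) = x := by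
  have hi' : 2 * k - i ≤ 2 * k := Nat.sub_le _ _
  have hinv : Set.InvOn (dyckShift k (2 * k - i)) (dyckShift k i) (DyckSet k) (DyckSet k) := by
    refine ⟨fun x hx => dyckShift_two_mul_sub_dyckShift hi.le hx, fun x hx => ?_⟩
    simpa only [Nat.sub_sub_self hi.le] using dyckShift_two_mul_sub_dyckShift hi' hx
  exact ⟨fun x hx => dyckShift_mem hi.le hx,
    hinv.bijOn (fun x hx => dyckShift_mem hi.le hx) (fun x hx => dyckShift_mem hi' hx),
    fun x hx => dyckShift_two_mul_sub_dyckShift hi.le hx⟩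
end

section
/- For a continuous function g : [0,1] → [0,∞) with g(0) = g(1) = 0 and g not identically zero, the quotient metric space T_g = [0,1]/{d_g = 0}, endowed with the metric induced by d_g, is a compact real tree. -/
/-!
Writing `d_g(s,t) = g s + g t - 2 m_g(s,t)`, the four-point condition
`d(x,y) + d(z,w) ≤ max (d(x,z) + d(y,w)) (d(x,w) + d(y,z))` for `d_g` is the statement that the
smallest of the three pairwise sums of `m_g` is attained twice, which holds for any symmetric `m`
with `min (m s u) (m u t) ≤ m s t`; for `m_g` this is `[s, t] ⊆ [s, u] ∪ [u, t]`.

A connected metric space with the four-point condition is a real tree. Between `a` and `b`, the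
points `y` with `d(a,y) + d(y,b) = d(a,b)` lie at mutual distance `|d(a,y) - d(a,y')|`, so they form
at most one geodesic, and every preconnected set containing `a` and `b` meets each level
`d(a,y) = c`: otherwise, with the Gromov product `(y|b)_a = (d(a,y) + d(a,b) - d(y,b)) / 2`,
the open sets `{y | (y|b)_a < c}` and `{y | (y|b)_a ≥ c, d(a,y) > c}` would disconnect it. If `y` lies on an injective path from `a` to `b`, the point `w` of the geodesic with
`(w|b)_a = (y|b)_a` lies between `a` and `y` and between `y` and `b`, so both halves of the path,
split at `y`, pass through `w`, forcing `w = y`.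
Compactness and connectedness of `T` come from the continuity of `p`.
-/

open Set

/-- `m_g(s,t) = inf_{r ∈ [s∧t, s∨t]} g(r)`. -/
noncomputable def mOf (g : ℝ → ℝ) (s t : ℝ) : ℝ := sInf (g '' Icc (min s t) (max s t))

/-- `d_g(s,t) = g(s) + g(t) - 2 m_g(s,t)`. -/
noncomputable def dOf (g : ℝ → ℝ) (s t : ℝ) : ℝ := g s + g t - 2 * mOf g s t

/-- A (compact) real tree: a metric space in which any two points `a, b` are joined by a
unique isometric arc `f : [0, d(a,b)] → T`, and every continuous injective path from `a`
to `b` has the same range as this arc. -/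
def IsRealTree (T : Type*) [MetricSpace T] : Prop :=
  ∀ a b : T, ∃ f : Icc (0 : ℝ) (dist a b) → T,
    (Isometry f ∧ f ⟨0, left_mem_Icc.mpr dist_nonneg⟩ = a ∧
      f ⟨dist a b, right_mem_Icc.mpr dist_nonneg⟩ = b) ∧
    (∀ f' : Icc (0 : ℝ) (dist a b) → T, Isometry f' →
      f' ⟨0, left_mem_Icc.mpr dist_nonneg⟩ = a →
      f' ⟨dist a b, right_mem_Icc.mpr dist_nonneg⟩ = b → f' = f) ∧
    (∀ q : Icc (0 : ℝ) 1 → T, Continuous q → Function.Injective q →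
      q ⟨0, left_mem_Icc.mpr zero_le_one⟩ = a →
      q ⟨1, right_mem_Icc.mpr zero_le_one⟩ = b → range q = range f)

def FourPointCondition (T : Type*) [PseudoMetricSpace T] : Prop :=
  ∀ x y z w : T, dist x y + dist z w ≤ max (dist x z + dist y w) (dist x w + dist y z)

theorem Isometry.dist_add_dist_Icc {X : Type*} [PseudoMetricSpace X] {D : ℝ} (hD : 0 ≤ D)
    {f : Icc (0 : ℝ) D → X} (hf : Isometry f) (c : Icc (0 : ℝ) D) :
    dist (f ⟨0, left_mem_Icc.2 hD⟩) (f c) = c ∧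
      dist (f ⟨0, left_mem_Icc.2 hD⟩) (f c) + dist (f c) (f ⟨D, right_mem_Icc.2 hD⟩) =
        dist (f ⟨0, left_mem_Icc.2 hD⟩) (f ⟨D, right_mem_Icc.2 hD⟩) := by
  obtain ⟨hc0, hcD⟩ := c.2
  simp only [hf.dist_eq, Subtype.dist_eq, Real.dist_eq, zero_sub, abs_neg, abs_of_nonneg hc0,
    abs_of_nonneg hD, abs_of_nonpos (sub_nonpos.2 hcD), true_and]
  ring

namespace FourPointCondition

section PseudoMetric

variable {T : Type*} [PseudoMetricSpace T]

theorem dist_eq_abs_sub (hT : FourPointCondition T) {a b y y' : T}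
    (hy : dist a y + dist y b = dist a b) (hy' : dist a y' + dist y' b = dist a b) :
    dist y y' = |dist a y - dist a y'| := by
  refine le_antisymm ?_ ?_
  · have h := hT a b y y'
    rw [dist_comm b y', dist_comm b y] at h
    rcases le_max_iff.1 h with h | h <;>
      linarith [le_abs_self (dist a y - dist a y'), neg_abs_le (dist a y - dist a y')]
  · simpa only [dist_comm a] using abs_dist_sub_le y y' a

theorem dist_add_dist_eq_of_dist_sub_dist_eq (hT : FourPointCondition T) {a b y w : T}
    (hw : dist a w + dist w b = dist a b) (hlevel : dist a w - dist w b = dist a y - dist y b) :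
    dist a w + dist w y = dist a y ∧ dist y w + dist w b = dist y b := by
  have h := hT a b y w
  rw [dist_comm b w, dist_comm b y] at h
  rcases le_max_iff.1 h with h | h <;> constructor <;>
    linarith [dist_triangle a w y, dist_triangle y w b, dist_comm w y]

theorem isOpen_setOf_beyond (hT : FourPointCondition T) (a b : T) (c : ℝ) :
    IsOpen {y | 2 * c ≤ dist a y - dist y b + dist a b ∧ c < dist a y} := by
  refine Metric.isOpen_iff.2 fun y ⟨hyc, hay⟩ =>
    ⟨dist a y - c, by linarith, fun y' hy' => ?_⟩
  rw [Metric.mem_ball] at hy'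
  have hay' : dist a y ≤ dist a y' + dist y' y := dist_triangle a y' y
  refine ⟨?_, by linarith⟩
  by_contra! hy'c
  rcases le_max_iff.1 (hT y' b a y) with h | h <;>
    linarith [dist_comm y' a, dist_comm b y, dist_comm b a, dist_triangle a y' b]

theorem exists_mem_dist_eq (hT : FourPointCondition T) {K : Set T} (hK : IsPreconnected K)
    {a b : T} (ha : a ∈ K) (hb : b ∈ K) {c : ℝ} (hc0 : 0 ≤ c) (hcD : c ≤ dist a b) :
    ∃ w ∈ K, dist a w = c ∧ dist a w + dist w b = dist a b := by
  rcases hc0.eq_or_lt with rfl | hc0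
  · exact ⟨a, ha, dist_self a, by rw [dist_self, zero_add]⟩
  rcases hcD.eq_or_lt with rfl | hcD
  · exact ⟨b, hb, rfl, by rw [dist_self, add_zero]⟩
  by_contra! hK'
  obtain ⟨y, -, hyU, hyV, -⟩ := hK {y | dist a y - dist y b + dist a b < 2 * c}
    {y | 2 * c ≤ dist a y - dist y b + dist a b ∧ c < dist a y}
    (isOpen_lt (by fun_prop) (by fun_prop)) (hT.isOpen_setOf_beyond a b c)
    (fun y hy => by
      rcases lt_or_ge (dist a y - dist y b + dist a b) (2 * c) with hyc | hyc
      · exact Or.inl hyc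
      refine Or.inr ⟨hyc, lt_of_not_ge fun hay => hK' y hy ?_ ?_⟩ <;>
        linarith [dist_triangle a y b])
    ⟨a, ha, by rw [mem_ofPred_eq, dist_self]; linarith⟩
    ⟨b, hb, by rw [mem_ofPred_eq, dist_self]; exact ⟨by linarith, hcD⟩⟩
  exact not_le.2 hyU hyV

end PseudoMetric

variable {T : Type*} [MetricSpace T]

theorem eq_of_dist_eq (hT : FourPointCondition T) {a b y y' : T}
    (hy : dist a y + dist y b = dist a b) (hy' : dist a y' + dist y' b = dist a b)
    (h : dist a y = dist a y') : y = y' :=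
  dist_eq_zero.1 <| by rw [hT.dist_eq_abs_sub hy hy', h, sub_self, abs_zero]

theorem mem_of_dist_add_dist_eq (hT : FourPointCondition T) {K : Set T} (hK : IsPreconnected K)
    {a b w : T} (ha : a ∈ K) (hb : b ∈ K) (hw : dist a w + dist w b = dist a b) : w ∈ K := by
  obtain ⟨w', hw'K, hw'a, hw'⟩ := hT.exists_mem_dist_eq hK ha hb (c := dist a w) dist_nonneg
    (by linarith [dist_nonneg (x := w) (y := b)])
  rwa [hT.eq_of_dist_eq hw hw' hw'a.symm]

theorem dist_add_dist_eq_of_injective (hT : FourPointCondition T) {a b : T}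
    {q : Icc (0 : ℝ) 1 → T} (hq : Continuous q) (hinj : Function.Injective q)
    (hq0 : q ⟨0, left_mem_Icc.mpr zero_le_one⟩ = a)
    (hq1 : q ⟨1, right_mem_Icc.mpr zero_le_one⟩ = b)
    (θ : Icc (0 : ℝ) 1) : dist a (q θ) + dist (q θ) b = dist a b := by
  set y := q θ
  obtain ⟨w, -, hwa, hw⟩ := hT.exists_mem_dist_eq (isPreconnected_range hq) ⟨_, hq0⟩
    ⟨_, hq1⟩ (c := (dist a y - dist y b + dist a b) / 2)
    (by linarith [dist_triangle y a b, dist_comm a y])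
    (by linarith [dist_triangle a b y, dist_comm b y])
  obtain ⟨hayw, hywb⟩ := hT.dist_add_dist_eq_of_dist_sub_dist_eq (y := y) hw (by linarith)
  obtain ⟨θ₁, hθ₁, hw₁⟩ := hT.mem_of_dist_add_dist_eq
    (isPreconnected_Iic.image q hq.continuousOn) ⟨_, θ.2.1, hq0⟩ ⟨θ, le_rfl, rfl⟩ hayw
  obtain ⟨θ₂, hθ₂, hw₂⟩ := hT.mem_of_dist_add_dist_eq
    (isPreconnected_Ici.image q hq.continuousOn) ⟨θ, le_rfl, rfl⟩ ⟨_, θ.2.2, hq1⟩ hywb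
  have hθ : θ₁ = θ := le_antisymm hθ₁ (hinj (hw₁.trans hw₂.symm) ▸ hθ₂)
  rwa [show y = w by rw [← hw₁, hθ]]

theorem isRealTree [PreconnectedSpace T] (hT : FourPointCondition T) : IsRealTree T := by
  intro a b
  choose f _ hfa hf using fun c : Icc (0 : ℝ) (dist a b) =>
    hT.exists_mem_dist_eq isPreconnected_univ (mem_univ a) (mem_univ b) c.2.1 c.2.2
  have eq_f : ∀ {y} (c : Icc (0 : ℝ) (dist a b)), dist a y = c →
      dist a y + dist y b = dist a b → y = f c :=
    fun c hya hy => hT.eq_of_dist_eq hy (hf c) (hya.trans (hfa c).symm)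
  refine ⟨f, ⟨Isometry.of_dist_eq fun c c' => ?_, (eq_f _ (dist_self a) (by simp)).symm,
    (eq_f _ rfl (by simp)).symm⟩, fun f' hf' h0 hD => funext fun c => ?_,
    fun q hq hinj hq0 hq1 => Subset.antisymm ?_ ?_⟩
  · rw [hT.dist_eq_abs_sub (hf c) (hf c'), hfa, hfa, Subtype.dist_eq, Real.dist_eq]
  · obtain ⟨h1, h2⟩ := hf'.dist_add_dist_Icc dist_nonneg c
    simp only [h0, hD] at h1 h2
    exact eq_f c h1 h2
  · rintro _ ⟨θ, rfl⟩
    have hy := hT.dist_add_dist_eq_of_injective hq hinj hq0 hq1 θ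
    exact ⟨⟨dist a (q θ), dist_nonneg, by linarith [dist_nonneg (x := q θ) (y := b)]⟩,
      (eq_f _ rfl hy).symm⟩
  · rintro _ ⟨c, rfl⟩
    exact hT.mem_of_dist_add_dist_eq (isPreconnected_range hq) ⟨_, hq0⟩ ⟨_, hq1⟩ (hf c)

end FourPointCondition

section Excursion

variable {g : ℝ → ℝ} {s t u r η : ℝ}

theorem mOf_comm (g : ℝ → ℝ) (s t : ℝ) : mOf g s t = mOf g t s := by
  rw [mOf, mOf, min_comm, max_comm]

theorem mOf_le (hb : BddBelow (g '' uIcc s t)) (hr : r ∈ uIcc s t) : mOf g s t ≤ g r :=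
  csInf_le hb (mem_image_of_mem g hr)

theorem min_mOf_le_mOf (hsu : BddBelow (g '' uIcc s u)) (hut : BddBelow (g '' uIcc u t)) :
    min (mOf g s u) (mOf g u t) ≤ mOf g s t :=
  le_csInf (nonempty_uIcc.image g) <| forall_mem_image.2 fun _ hr =>
    (uIcc_subset_uIcc_union_uIcc hr).elim (fun h => (min_le_left _ _).trans (mOf_le hsu h))
      fun h => (min_le_right _ _).trans (mOf_le hut h)

theorem dOf_le (hη : ∀ r ∈ uIcc s t, |g r - g s| ≤ η) : dOf g s t ≤ 3 * η := by
  have hm : g s - η ≤ mOf g s t := le_csInf (nonempty_uIcc.image g) <| forall_mem_image.2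
    fun r hr => by linarith [neg_abs_le (g r - g s), hη r hr]
  have ht := (le_abs_self (g t - g s)).trans (hη t right_mem_uIcc)
  rw [dOf]
  linarith

end Excursion

theorem four_point_of_min_le {α : Type*} (P : α → α → ℝ) (hsymm : ∀ x y, P x y = P y x)
    (hP : ∀ x y z, min (P x z) (P z y) ≤ P x y) (x y z w : α) :
    min (P x z + P y w) (P x w + P y z) ≤ P x y + P z w := by
  by_contra! h
  rw [lt_min_iff] at h
  rcases min_le_iff.1 (hP x y z) with h1 | h1 <;> rcases min_le_iff.1 (hP x y w) with h2 | h2 <;>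
    rcases min_le_iff.1 (hP z w x) with h3 | h3 <;> rcases min_le_iff.1 (hP z w y) with h4 | h4 <;>
    linarith [hsymm z y, hsymm w y, hsymm z x]

section Quotient

variable {g : ℝ → ℝ} {T : Type*} [PseudoMetricSpace T] {p : Icc (0 : ℝ) 1 → T}

theorem fourPointCondition_of_dist_eq_dOf (hg : BddBelow (g '' Icc 0 1))
    (hsurj : Function.Surjective p)
    (hdist : ∀ s t : Icc (0 : ℝ) 1, dist (p s) (p t) = dOf g s t) : FourPointCondition T := by
  have hP : ∀ s t u : Icc (0 : ℝ) 1, min (mOf g s u) (mOf g u t) ≤ mOf g s t := fun s t u =>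
    min_mOf_le_mOf (hg.mono (image_mono (uIcc_subset_Icc s.2 u.2)))
      (hg.mono (image_mono (uIcc_subset_Icc u.2 t.2)))
  intro x y z w
  obtain ⟨x, rfl⟩ := hsurj x
  obtain ⟨y, rfl⟩ := hsurj y
  obtain ⟨z, rfl⟩ := hsurj z
  obtain ⟨w, rfl⟩ := hsurj w
  simp only [hdist, dOf]
  rcases min_le_iff.1 (four_point_of_min_le (fun s t : Icc (0 : ℝ) 1 => mOf g s t)
    (fun s t => mOf_comm g s t) hP x y z w) with h | h
  · exact le_max_of_le_left (by linarith)
  · exact le_max_of_le_right (by linarith)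

theorem continuous_of_dist_eq_dOf (hcont : ContinuousOn g (Icc 0 1))
    (hdist : ∀ s t : Icc (0 : ℝ) 1, dist (p s) (p t) = dOf g s t) : Continuous p := by
  refine Metric.continuous_iff.2 fun s ε hε => ?_
  obtain ⟨δ, hδ, hg⟩ := Metric.continuousWithinAt_iff.1 (hcont s s.2) (ε / 4) (by positivity)
  refine ⟨δ, hδ, fun t hts => ?_⟩
  rw [dist_comm, hdist]
  refine (dOf_le (η := ε / 4) fun r hr => ?_).trans_lt (by linarith)
  rw [← Real.dist_eq]
  refine (hg (uIcc_subset_Icc s.2 t.2 hr) ?_).le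
  rw [Subtype.dist_eq, Real.dist_eq] at hts
  rw [Real.dist_eq]
  exact (abs_sub_left_of_mem_uIcc hr).trans_lt hts

end Quotient

/-- `T_g` is represented by any metric space `T` with a surjection `p` from `[0,1]` satisfying
`dist (p s) (p t) = d_g s t`. -/
theorem quotient_is_compact_realTree_general (g : ℝ → ℝ)
    (hcont : ContinuousOn g (Icc 0 1))
    (T : Type*) [MetricSpace T] (p : Icc (0 : ℝ) 1 → T)
    (hsurj : Function.Surjective p)
    (hdist : ∀ s t : Icc (0 : ℝ) 1, dist (p s) (p t) = dOf g s t) :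
    CompactSpace T ∧ IsRealTree T := by
  have hp : Continuous p := continuous_of_dist_eq_dOf hcont hdist
  have : ConnectedSpace T := hsurj.connectedSpace hp
  refine ⟨⟨hsurj.range_eq ▸ isCompact_range hp⟩, ?_⟩
  exact (fourPointCondition_of_dist_eq_dOf (isCompact_Icc.bddBelow_image hcont) hsurj
    hdist).isRealTree

/-- For a continuous function `g : [0,1] → [0,∞)` with `g 0 = g 1 = 0` not identically
zero, the quotient metric space `T_g = [0,1]/{d_g = 0}` (represented here by any metric
space `T` with a surjection `p` from `[0,1]` satisfying `dist (p s) (p t) = d_g s t`)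
is a compact real tree. -/
theorem quotient_is_compact_realTree (g : ℝ → ℝ)
    (hcont : ContinuousOn g (Icc 0 1)) (hpos : ∀ t ∈ Icc (0 : ℝ) 1, 0 ≤ g t)
    (h0 : g 0 = 0) (h1 : g 1 = 0) (hne : ∃ t ∈ Icc (0 : ℝ) 1, g t ≠ 0)
    (T : Type*) [MetricSpace T] (p : Icc (0 : ℝ) 1 → T)
    (hsurj : Function.Surjective p)
    (hdist : ∀ s t : Icc (0 : ℝ) 1, dist (p s) (p t) = dOf g s t) :
    CompactSpace T ∧ IsRealTree T :=
  quotient_is_compact_realTree_general g hcont T p hsurj hdist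
end

section
/- Re-rooting lemma: let g : [0,1] → [0,∞) be continuous with g(0) = g(1) = 0, and fix s_0 ∈ [0,1]. Define g'(s) = g(s_0) + g(\overline{s_0+s}) − 2 m_g(s_0, \overline{s_0+s}), where \overline{r} denotes the fractional part of r and m_g(a,b) = inf over the interval between a and b of g. Then g' is continuous with g'(0) = g'(1) = 0, and for all s, t ∈ [0,1] one has d_{g'}(s,t) = d_g(\overline{s_0+s}, \overline{s_0+t}). Consequently there is a unique isometry R from T_{g'} onto T_g with R(p_{g'}(s)) = p_g(\overline{s_0+s}) for every s. -/
open Set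

/-!
The rerooted function is `g' s = d_g(s₀, σ s)` with `σ s = fract (s₀ + s)`: the height above the
new root `s₀`. As `d_g` does not distinguish `0` from `1`, `g'` is continuous. If `σ` maps `[s, t]`
onto an interval of `[0, 1]` with `s₀` outside its interior, the minimum of `d_g(s₀, ·)` over that
interval is the Gromov product `(σ s | σ t)_{s₀}`: it is attained at the lowest point of the
interval, or at height `m_g(s₀, σ s)` on the ancestral line of `σ s`. A general `[s, t]` splits at
the wrap point `1 - s₀`, which `σ` sends to the old root `0`, into two such pieces. Hence `m_{g'}(s, t) = (σ s | σ t)_{s₀}`, which is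
`d_{g'}(s, t) = d_g(σ s, σ t)` after unfolding, and `p' s ↦ p (σ s)` is the isometry.
-/

open Function
open scoped Interval

section RunningMinimum

variable {g : ℝ → ℝ} {a x y z u : ℝ}

theorem mOf_eq_sInf_uIcc (g : ℝ → ℝ) (x y : ℝ) : mOf g x y = sInf (g '' [[x, y]]) := rfl

theorem mOf_comm_s10 (g : ℝ → ℝ) (x y : ℝ) : mOf g x y = mOf g y x := by
  rw [mOf_eq_sInf_uIcc, mOf_eq_sInf_uIcc, uIcc_comm]

theorem mOf_self (g : ℝ → ℝ) (x : ℝ) : mOf g x x = g x := by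
  rw [mOf_eq_sInf_uIcc, uIcc_self, image_singleton, csInf_singleton]

theorem dOf_comm (g : ℝ → ℝ) (x y : ℝ) : dOf g x y = dOf g y x := by
  rw [dOf, dOf, mOf_comm_s10, add_comm (g x)]

theorem dOf_self (g : ℝ → ℝ) (x : ℝ) : dOf g x x = 0 := by
  rw [dOf, mOf_self]; ring

theorem isLeast_mOf (hg : ContinuousOn g [[x, y]]) : IsLeast (g '' [[x, y]]) (mOf g x y) := by
  obtain ⟨v, hv, hmin⟩ := isCompact_uIcc.exists_isMinOn nonempty_uIcc hg
  have h : IsLeast (g '' [[x, y]]) (g v) := ⟨mem_image_of_mem g hv, forall_mem_image.2 hmin⟩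
  rwa [mOf_eq_sInf_uIcc, h.csInf_eq]

theorem mOf_le_s10 (hg : ContinuousOn g [[x, y]]) (hu : u ∈ [[x, y]]) : mOf g x y ≤ g u :=
  (isLeast_mOf hg).2 (mem_image_of_mem g hu)

theorem mOf_le_mOf_of_subset {x' y' : ℝ} (hg : ContinuousOn g [[x, y]])
    (h : [[x', y']] ⊆ [[x, y]]) : mOf g x y ≤ mOf g x' y' := by
  obtain ⟨v, hv, hgv⟩ := (isLeast_mOf (hg.mono h)).1
  exact hgv ▸ mOf_le_s10 hg (h hv)

theorem mOf_eq_min (hg : ContinuousOn g [[x, y]]) (hz : z ∈ [[x, y]]) :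
    mOf g x y = min (mOf g x z) (mOf g z y) := by
  have hunion : [[x, z]] ∪ [[z, y]] = [[x, y]] :=
    (union_subset (uIcc_subset_uIcc_left hz) (uIcc_subset_uIcc_right hz)).antisymm
      uIcc_subset_uIcc_union_uIcc
  refine (isLeast_mOf hg).unique ?_
  rw [← hunion, image_union]
  exact (isLeast_mOf (hg.mono (uIcc_subset_uIcc_left hz))).union
    (isLeast_mOf (hg.mono (uIcc_subset_uIcc_right hz)))

theorem mOf_eq_zero (hg : ∀ u ∈ [[x, y]], 0 ≤ g u) (hx : g x = 0) : mOf g x y = 0 :=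
  IsLeast.csInf_eq ⟨⟨x, left_mem_uIcc, hx⟩, forall_mem_image.2 hg⟩

theorem continuous_mOf (hg : Continuous g) : Continuous fun p : ℝ × ℝ => mOf g p.1 p.2 := by
  have h : ∀ p : ℝ × ℝ,
      mOf g p.1 p.2 = sInf ((fun θ => g (p.1 + θ * (p.2 - p.1))) '' Icc 0 1) := fun p => by
    rw [mOf_eq_sInf_uIcc, ← segment_eq_uIcc, segment_eq_image', image_image]
    rfl
  simp_rw [h]
  exact isCompact_Icc.continuous_sInf (by fun_prop)

theorem continuousOn_mOf {l r : ℝ} (hg : ContinuousOn g (Icc l r)) (ha : a ∈ Icc l r) :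
    ContinuousOn (mOf g a) (Icc l r) := by
  have hlr : l ≤ r := ha.1.trans ha.2
  set G := IccExtend hlr ((Icc l r).domRestrict g)
  have hG : Continuous G := continuous_IccExtend_iff.2 hg.domRestrict
  have heq : EqOn (mOf G a) (mOf g a) (Icc l r) := fun u hu => by
    rw [mOf_eq_sInf_uIcc, mOf_eq_sInf_uIcc, EqOn.image_eq]
    intro v hv
    simp [G, IccExtend_of_mem hlr _ (uIcc_subset_Icc ha hu hv)]
  exact ((continuous_mOf hG).comp (Continuous.prodMk_right a)).continuousOn.congr heq.symm

theorem exists_mem_uIcc_eq_mOf {h : ℝ} (hg : ContinuousOn g [[x, y]]) (hlo : mOf g x y ≤ h)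
    (hhi : h ≤ g x) : ∃ w ∈ [[x, y]], g w = h ∧ mOf g x w = h := by
  obtain ⟨w₀, hw₀, hmw₀⟩ := intermediate_value_uIcc (continuousOn_mOf hg left_mem_uIcc)
    (by rw [mOf_self]; exact mem_uIcc.2 (Or.inr ⟨hlo, hhi⟩))
  have hsub : [[x, w₀]] ⊆ [[x, y]] := uIcc_subset_uIcc_left hw₀
  obtain ⟨w, hw, hgw⟩ := (isLeast_mOf (hg.mono hsub)).1
  have hsub' : [[x, w]] ⊆ [[x, w₀]] := uIcc_subset_uIcc_left hw
  refine ⟨w, hsub hw, hgw.trans hmw₀, le_antisymm ?_ ?_⟩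
  · exact (mOf_le_s10 (hg.mono (hsub'.trans hsub)) right_mem_uIcc).trans (hgw.trans hmw₀).le
  · exact hmw₀ ▸ mOf_le_mOf_of_subset (hg.mono hsub) hsub'

end RunningMinimum

noncomputable def gromovProd (g : ℝ → ℝ) (a x y : ℝ) : ℝ :=
  (dOf g a x + dOf g a y - dOf g x y) / 2

section Gromov

variable {g : ℝ → ℝ} {a x y : ℝ}

theorem gromovProd_eq (g : ℝ → ℝ) (a x y : ℝ) :
    gromovProd g a x y = g a + mOf g x y - mOf g a x - mOf g a y := by
  rw [gromovProd, dOf, dOf, dOf]; ring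

theorem gromovProd_comm (g : ℝ → ℝ) (a x y : ℝ) : gromovProd g a x y = gromovProd g a y x := by
  rw [gromovProd, gromovProd, dOf_comm g x y, add_comm (dOf g a x)]

theorem dOf_eq_of_mOf_eq_gromovProd {f : ℝ → ℝ} {s t : ℝ} (hs : f s = dOf g a x)
    (ht : f t = dOf g a y) (hm : mOf f s t = gromovProd g a x y) : dOf f s t = dOf g x y := by
  rw [dOf, hs, ht, hm, gromovProd]; ring

theorem isLeast_dOf_image_uIcc (hg : ContinuousOn g [[a, y]]) (hx : x ∈ [[a, y]]) :
    IsLeast (dOf g a '' [[x, y]]) (gromovProd g a x y) := by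
  have hxy : [[x, y]] ⊆ [[a, y]] := uIcc_subset_uIcc_right hx
  have hsplit : ∀ u ∈ [[x, y]], mOf g a u = min (mOf g a x) (mOf g x u) := fun u hu =>
    mOf_eq_min (hg.mono (uIcc_subset_uIcc_left (hxy hu))) (by
      rw [mem_uIcc] at hx hu ⊢; grind)
  set A := mOf g a x
  set c := mOf g x y
  have hay : mOf g a y = min A c := hsplit y right_mem_uIcc
  rw [gromovProd_eq, hay]
  refine ⟨?_, forall_mem_image.2 fun u hu => ?_⟩
  · rcases le_total A c with hAc | hcA
    · obtain ⟨v, hv, hgv⟩ := (isLeast_mOf (hg.mono hxy)).1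
      have hcv : c ≤ mOf g x v := mOf_le_mOf_of_subset (hg.mono hxy) (uIcc_subset_uIcc_left hv)
      refine ⟨v, hv, ?_⟩
      rw [dOf, hsplit v hv, min_eq_left (hAc.trans hcv), min_eq_left hAc, hgv]; ring
    · obtain ⟨w, hw, hgw, hmw⟩ := exists_mem_uIcc_eq_mOf (hg.mono hxy) hcA
        (mOf_le_s10 (hg.mono (uIcc_subset_uIcc_left hx)) right_mem_uIcc)
      refine ⟨w, hw, ?_⟩
      rw [dOf, hsplit w hw, hmw, min_self, min_eq_right hcA, hgw]; ring
  · have hcu : c ≤ mOf g x u := mOf_le_mOf_of_subset (hg.mono hxy) (uIcc_subset_uIcc_left hu)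
    have hug : mOf g x u ≤ g u :=
      mOf_le_s10 (hg.mono ((uIcc_subset_uIcc_left hu).trans hxy)) right_mem_uIcc
    rw [dOf, hsplit u hu]
    rcases le_total A c with hAc | hcA
    · rw [min_eq_left (hAc.trans hcu), min_eq_left hAc]; linarith
    · rw [min_eq_right hcA]; linarith [min_le_left A (mOf g x u), min_le_right A (mOf g x u)]

end Gromov

structure IsExcursion (g : ℝ → ℝ) : Prop where
  continuousOn : ContinuousOn g (Icc 0 1)
  nonneg : ∀ t ∈ Icc (0 : ℝ) 1, 0 ≤ g t
  map_zero : g 0 = 0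
  map_one : g 1 = 0

noncomputable def reroot (g : ℝ → ℝ) (s₀ s : ℝ) : ℝ := dOf g s₀ (Int.fract (s₀ + s))

namespace IsExcursion

variable {g : ℝ → ℝ} {a x y z s₀ s t : ℝ}

theorem continuousOn_uIcc (hg : IsExcursion g) (hx : x ∈ Icc (0 : ℝ) 1)
    (hy : y ∈ Icc (0 : ℝ) 1) : ContinuousOn g [[x, y]] :=
  hg.continuousOn.mono (uIcc_subset_Icc hx hy)

theorem mOf_zero_left (hg : IsExcursion g) (hx : x ∈ Icc (0 : ℝ) 1) : mOf g 0 x = 0 :=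
  mOf_eq_zero (fun u hu => hg.nonneg u (uIcc_subset_Icc (left_mem_Icc.2 zero_le_one) hx hu))
    hg.map_zero

theorem mOf_one_left (hg : IsExcursion g) (hx : x ∈ Icc (0 : ℝ) 1) : mOf g 1 x = 0 :=
  mOf_eq_zero (fun u hu => hg.nonneg u (uIcc_subset_Icc (right_mem_Icc.2 zero_le_one) hx hu))
    hg.map_one

theorem dOf_fract_left (hg : IsExcursion g) (hz : z ∈ Icc (0 : ℝ) 1) (hx : x ∈ Icc (0 : ℝ) 1) :
    dOf g (Int.fract z) x = dOf g z x := by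
  rcases hz.2.lt_or_eq with hz1 | rfl
  · rw [Int.fract_eq_self.2 ⟨hz.1, hz1⟩]
  · rw [Int.fract_one, dOf, dOf, hg.mOf_zero_left hx, hg.mOf_one_left hx, hg.map_zero,
      hg.map_one]

theorem dOf_fract_right (hg : IsExcursion g) (hx : x ∈ Icc (0 : ℝ) 1) (hz : z ∈ Icc (0 : ℝ) 1) :
    dOf g x (Int.fract z) = dOf g x z := by
  rw [dOf_comm, hg.dOf_fract_left hz hx, dOf_comm]

theorem dOf_fract_fract (hg : IsExcursion g) (hx : x ∈ Icc (0 : ℝ) 1) (hy : y ∈ Icc (0 : ℝ) 1) :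
    dOf g (Int.fract x) (Int.fract y) = dOf g x y := by
  rw [hg.dOf_fract_left hx (unitInterval.fract_mem y), hg.dOf_fract_right hx hy]

theorem gromovProd_fract_fract (hg : IsExcursion g) (ha : a ∈ Icc (0 : ℝ) 1)
    (hx : x ∈ Icc (0 : ℝ) 1) (hy : y ∈ Icc (0 : ℝ) 1) :
    gromovProd g a (Int.fract x) (Int.fract y) = gromovProd g a x y := by
  rw [gromovProd, gromovProd, hg.dOf_fract_right ha hx, hg.dOf_fract_right ha hy,
    hg.dOf_fract_fract hx hy]

theorem continuous_reroot (hg : IsExcursion g) (hs₀ : s₀ ∈ Icc (0 : ℝ) 1) :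
    Continuous (reroot g s₀) := by
  have hd : ContinuousOn (dOf g s₀) (Icc 0 1) :=
    (continuousOn_const.add hg.continuousOn).sub
      (continuousOn_const.mul (continuousOn_mOf hg.continuousOn hs₀))
  have hd01 : dOf g s₀ 0 = dOf g s₀ 1 := by
    simpa using hg.dOf_fract_right hs₀ (right_mem_Icc.2 zero_le_one)
  exact (hd.comp_fract'' hd01).comp (continuous_const_add s₀)

theorem reroot_zero (hg : IsExcursion g) (hs₀ : s₀ ∈ Icc (0 : ℝ) 1) : reroot g s₀ 0 = 0 := by
  rw [reroot, add_zero, hg.dOf_fract_right hs₀ hs₀, dOf_self]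

theorem reroot_one (hg : IsExcursion g) (hs₀ : s₀ ∈ Icc (0 : ℝ) 1) : reroot g s₀ 1 = 0 := by
  rw [reroot, Int.fract_add_one, hg.dOf_fract_right hs₀ hs₀, dOf_self]

theorem reroot_eq_dOf (hg : IsExcursion g) (hs₀ : s₀ ∈ Icc (0 : ℝ) 1) (k : ℤ)
    (h : s₀ + s - k ∈ Icc (0 : ℝ) 1) : reroot g s₀ s = dOf g s₀ (s₀ + s - k) := by
  rw [reroot, ← Int.fract_sub_intCast, hg.dOf_fract_right hs₀ h]

theorem reroot_image_Icc (hg : IsExcursion g) (hs₀ : s₀ ∈ Icc (0 : ℝ) 1) (k : ℤ)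
    (hs : k ≤ s₀ + s) (ht : s₀ + t ≤ k + 1) :
    reroot g s₀ '' Icc s t = dOf g s₀ '' Icc (s₀ + s - k) (s₀ + t - k) := by
  have hshift : EqOn (reroot g s₀) (dOf g s₀ ∘ fun r => s₀ + r - k) (Icc s t) := fun r hr =>
    hg.reroot_eq_dOf hs₀ k ⟨by linarith [hr.1], by linarith [hr.2]⟩
  rw [hshift.image_eq, image_comp]
  congr 1
  simp_rw [add_sub_right_comm s₀]
  rw [image_const_add_Icc]

theorem isLeast_reroot_image_Icc_of_shift (hg : IsExcursion g) (hs₀ : s₀ ∈ Icc (0 : ℝ) 1)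
    (k : ℤ) (hst : s ≤ t) (hs : k ≤ s₀ + s) (ht : s₀ + t ≤ k + 1) (hside : k ≤ s ∨ t ≤ k) :
    IsLeast (reroot g s₀ '' Icc s t)
      (gromovProd g s₀ (Int.fract (s₀ + s)) (Int.fract (s₀ + t))) := by
  have hx : s₀ + s - k ∈ Icc (0 : ℝ) 1 := ⟨by linarith, by linarith⟩
  have hy : s₀ + t - k ∈ Icc (0 : ℝ) 1 := ⟨by linarith, by linarith⟩
  rw [hg.reroot_image_Icc hs₀ k hs ht, ← Int.fract_sub_intCast (s₀ + s) k,
    ← Int.fract_sub_intCast (s₀ + t) k, hg.gromovProd_fract_fract hs₀ hx hy,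
    ← uIcc_of_le (by linarith)]
  rcases hside with hks | htk
  · exact isLeast_dOf_image_uIcc (hg.continuousOn_uIcc hs₀ hy)
      (mem_uIcc.2 (Or.inl ⟨by linarith, by linarith⟩))
  · rw [uIcc_comm, gromovProd_comm]
    exact isLeast_dOf_image_uIcc (hg.continuousOn_uIcc hs₀ hx)
      (mem_uIcc.2 (Or.inr ⟨by linarith, by linarith⟩))

theorem gromovProd_eq_min (hg : IsExcursion g) (ha : a ∈ [[x, y]])
    (hx : x ∈ Icc (0 : ℝ) 1) (hy : y ∈ Icc (0 : ℝ) 1) :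
    gromovProd g a x y = min (gromovProd g a x 0) (gromovProd g a 0 y) := by
  have ha' : a ∈ Icc (0 : ℝ) 1 := uIcc_subset_Icc hx hy ha
  rw [gromovProd_eq, gromovProd_eq, gromovProd_eq, mOf_comm_s10 g x 0, hg.mOf_zero_left hx,
    mOf_comm_s10 g a 0, hg.mOf_zero_left ha', hg.mOf_zero_left hy,
    mOf_eq_min (hg.continuousOn_uIcc hx hy) ha, mOf_comm_s10 g x a]
  rcases le_total (mOf g a x) (mOf g a y) with h | h
  · rw [min_eq_left h, min_eq_right (by linarith)]; ring
  · rw [min_eq_right h, min_eq_left (by linarith)]; ring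

theorem isLeast_reroot_image_Icc (hg : IsExcursion g) (hs₀ : s₀ ∈ Icc (0 : ℝ) 1)
    (hs : 0 ≤ s) (hst : s ≤ t) (ht : t ≤ 1) :
    IsLeast (reroot g s₀ '' Icc s t)
      (gromovProd g s₀ (Int.fract (s₀ + s)) (Int.fract (s₀ + t))) := by
  rcases le_or_gt (s₀ + t) 1 with ht1 | ht1
  · exact hg.isLeast_reroot_image_Icc_of_shift hs₀ 0 hst (by push_cast; linarith [hs₀.1])
      (by push_cast; linarith) (Or.inl (by push_cast; linarith))
  rcases le_or_gt 1 (s₀ + s) with hs1 | hs1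
  · exact hg.isLeast_reroot_image_Icc_of_shift hs₀ 1 hst (by push_cast; linarith)
      (by push_cast; linarith [hs₀.2]) (Or.inr (by push_cast; linarith))
  have hμs : s ≤ 1 - s₀ := by linarith
  have hμt : 1 - s₀ ≤ t := by linarith
  have h₁ := hg.isLeast_reroot_image_Icc_of_shift hs₀ 0 hμs (by push_cast; linarith [hs₀.1])
    (by push_cast; linarith) (Or.inl (by push_cast; linarith))
  have h₂ := hg.isLeast_reroot_image_Icc_of_shift hs₀ 1 hμt (by push_cast; linarith)
    (by push_cast; linarith [hs₀.2]) (Or.inr (by push_cast; linarith))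
  rw [add_sub_cancel, Int.fract_one] at h₁ h₂
  have hfs : Int.fract (s₀ + s) = s₀ + s := Int.fract_eq_self.2 ⟨by linarith, hs1⟩
  have hft : Int.fract (s₀ + t) = s₀ + t - 1 := by
    rw [← Int.fract_sub_one]; exact Int.fract_eq_self.2 ⟨by linarith, by linarith [hs₀.2]⟩
  rw [← Icc_union_Icc_eq_Icc hμs hμt, image_union, hg.gromovProd_eq_min _
    (unitInterval.fract_mem _) (unitInterval.fract_mem _)]
  · exact h₁.union h₂
  · rw [hfs, hft]; exact mem_uIcc.2 (Or.inr ⟨by linarith, by linarith⟩)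

theorem mOf_reroot_of_le (hg : IsExcursion g) (hs₀ : s₀ ∈ Icc (0 : ℝ) 1)
    (hs : 0 ≤ s) (hst : s ≤ t) (ht : t ≤ 1) :
    mOf (reroot g s₀) s t = gromovProd g s₀ (Int.fract (s₀ + s)) (Int.fract (s₀ + t)) := by
  rw [mOf_eq_sInf_uIcc, uIcc_of_le hst, (hg.isLeast_reroot_image_Icc hs₀ hs hst ht).csInf_eq]

theorem dOf_reroot (hg : IsExcursion g) (hs₀ : s₀ ∈ Icc (0 : ℝ) 1) (hs : s ∈ Icc (0 : ℝ) 1)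
    (ht : t ∈ Icc (0 : ℝ) 1) :
    dOf (reroot g s₀) s t = dOf g (Int.fract (s₀ + s)) (Int.fract (s₀ + t)) := by
  rcases le_total s t with hst | hts
  · exact dOf_eq_of_mOf_eq_gromovProd rfl rfl (hg.mOf_reroot_of_le hs₀ hs.1 hst ht.2)
  · rw [dOf_comm, dOf_comm g]
    exact dOf_eq_of_mOf_eq_gromovProd rfl rfl (hg.mOf_reroot_of_le hs₀ ht.1 hts hs.2)

end IsExcursion

theorem existsUnique_isometry_of_dist_eq {X T T' : Type*} [PseudoMetricSpace T'] [MetricSpace T]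
    {p' : X → T'} {q : X → T} (hp' : Surjective p') (hq : Surjective q)
    (hdist : ∀ s t, dist (q s) (q t) = dist (p' s) (p' t)) :
    ∃! R : T' → T, Isometry R ∧ Surjective R ∧ ∀ s, R (p' s) = q s := by
  have hfactor : ∀ s t, p' s = p' t → q s = q t := fun s t h =>
    dist_eq_zero.1 (by rw [hdist, h, dist_self])
  have hR : ∀ s, q (surjInv hp' (p' s)) = q s := fun s => hfactor _ _ (surjInv_eq hp' _)
  refine ⟨q ∘ surjInv hp', ⟨Isometry.of_dist_eq fun x y => ?_, fun y => ?_, hR⟩, ?_⟩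
  · obtain ⟨s, rfl⟩ := hp' x
    obtain ⟨t, rfl⟩ := hp' y
    simp only [comp_apply, hR, hdist]
  · obtain ⟨s, rfl⟩ := hq y
    exact ⟨p' s, hR s⟩
  · rintro R ⟨-, -, hRq⟩
    funext x
    obtain ⟨s, rfl⟩ := hp' x
    rw [hRq, comp_apply, hR]

/-- Re-rooting lemma. Let `g : [0,1] → [0,∞)` be continuous with `g 0 = g 1 = 0`, fix
`s₀ ∈ [0,1]`, and set `g'(s) = g(s₀) + g(frac(s₀+s)) - 2 m_g(s₀, frac(s₀+s))` where
`frac` is the fractional part. Then `g'` is continuous on `[0,1]` with `g' 0 = g' 1 = 0`,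
`d_{g'}(s,t) = d_g(frac(s₀+s), frac(s₀+t))` for all `s, t ∈ [0,1]`, and there is a unique
isometry `R` from `T_{g'}` onto `T_g` (the coded trees being represented by metric spaces
`T', T` with projections `p', p`) with `R (p' s) = p (frac (s₀+s))` for every `s`. -/
theorem rerooting_lemma (g : ℝ → ℝ)
    (hcont : ContinuousOn g (Icc 0 1)) (hpos : ∀ t ∈ Icc (0 : ℝ) 1, 0 ≤ g t)
    (h0 : g 0 = 0) (h1 : g 1 = 0) (s₀ : ℝ) (hs₀ : s₀ ∈ Icc (0 : ℝ) 1)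
    (g' : ℝ → ℝ)
    (hg' : ∀ s, g' s = g s₀ + g (Int.fract (s₀ + s)) - 2 * mOf g s₀ (Int.fract (s₀ + s)))
    (T : Type*) [MetricSpace T] (p : Icc (0 : ℝ) 1 → T)
    (hsurj : Function.Surjective p)
    (hdist : ∀ s t : Icc (0 : ℝ) 1, dist (p s) (p t) = dOf g s t)
    (T' : Type*) [MetricSpace T'] (p' : Icc (0 : ℝ) 1 → T')
    (hsurj' : Function.Surjective p')
    (hdist' : ∀ s t : Icc (0 : ℝ) 1, dist (p' s) (p' t) = dOf g' s t) :
    (ContinuousOn g' (Icc 0 1) ∧ g' 0 = 0 ∧ g' 1 = 0) ∧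
    (∀ s ∈ Icc (0 : ℝ) 1, ∀ t ∈ Icc (0 : ℝ) 1,
      dOf g' s t = dOf g (Int.fract (s₀ + s)) (Int.fract (s₀ + t))) ∧
    (∃! R : T' → T, Isometry R ∧ Function.Surjective R ∧
      ∀ s : Icc (0 : ℝ) 1,
        R (p' s) = p ⟨Int.fract (s₀ + ↑s),
          ⟨Int.fract_nonneg _, (Int.fract_lt_one _).le⟩⟩) := by
  have hg : IsExcursion g := ⟨hcont, hpos, h0, h1⟩
  obtain rfl : g' = reroot g s₀ := funext hg'
  refine ⟨⟨(hg.continuous_reroot hs₀).continuousOn, hg.reroot_zero hs₀, hg.reroot_one hs₀⟩,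
    fun s hs t ht => hg.dOf_reroot hs₀ hs ht,
    existsUnique_isometry_of_dist_eq hsurj' (fun y => ?_) fun s t => ?_⟩
  · obtain ⟨u, rfl⟩ := hsurj y
    refine ⟨⟨Int.fract (u - s₀), unitInterval.fract_mem _⟩, eq_of_dist_eq_zero ?_⟩
    have hshift : s₀ + Int.fract (u - s₀) = u - ⌊(u : ℝ) - s₀⌋ := by rw [Int.fract]; ring
    rw [hdist]
    simp only [hshift, Int.fract_sub_intCast, hg.dOf_fract_left u.2 u.2, dOf_self]
  · rw [hdist, hdist', hg.dOf_reroot hs₀ s.2 t.2]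
end

section
/- Let g and g' be continuous functions from [0,1] to [0,∞) with g(0) = g(1) = g'(0) = g'(1) = 0 (neither identically zero). Then the Gromov–Hausdorff distance between the coded real trees satisfies d_GH(T_g, T_{g'}) ≤ 2·sup_{t∈[0,1]} |g(t) − g'(t)|. -/
open Metric Set

/-- The pointed Gromov-Hausdorff distance between two pointed metric spaces. -/
noncomputable def pointedGHDist (E₁ : Type) [MetricSpace E₁] (E₂ : Type) [MetricSpace E₂]
    (ρ₁ : E₁) (ρ₂ : E₂) : ℝ :=
  sInf {r : ℝ | ∃ (Z : Type) (_ : MetricSpace Z) (φ₁ : E₁ → Z) (φ₂ : E₂ → Z),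
    Isometry φ₁ ∧ Isometry φ₂ ∧
    r = max (hausdorffDist (range φ₁) (range φ₂)) (dist (φ₁ ρ₁) (φ₂ ρ₂))}

/-!
Both trees are quotients of `[0,1]`, so the identity of `[0,1]` induces a root-preserving
correspondence between them. Its distortion is `sup |d_g - d_{g'}| ≤ 4 ‖g - g'‖_∞`, since
taking the infimum over an interval is `1`-Lipschitz for the sup norm. Gluing the two trees
along this correspondence at distance `2 ‖g - g'‖_∞ + η` bounds `d_GH` by half the
distortion.
-/

section Infimum

variable {α : Type*} {f f' : α → ℝ} {s : Set α} {ε : ℝ}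

lemma sInf_image_le_sInf_image_add (hs : s.Nonempty) (hf : BddBelow (f '' s))
    (h : ∀ x ∈ s, f x ≤ f' x + ε) : sInf (f '' s) ≤ sInf (f' '' s) + ε := by
  suffices sInf (f '' s) - ε ≤ sInf (f' '' s) by linarith
  refine le_csInf (hs.image f') ?_
  rintro _ ⟨x, hx, rfl⟩
  linarith [csInf_le hf (mem_image_of_mem f hx), h x hx]

lemma abs_sInf_image_sub_le (hs : s.Nonempty) (hf : BddBelow (f '' s))
    (hf' : BddBelow (f' '' s)) (h : ∀ x ∈ s, |f x - f' x| ≤ ε) :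
    |sInf (f '' s) - sInf (f' '' s)| ≤ ε := by
  have h₁ := sInf_image_le_sInf_image_add (f' := f') hs hf fun x hx => by
    linarith [(abs_le.1 (h x hx)).2]
  have h₂ := sInf_image_le_sInf_image_add (f' := f) hs hf' fun x hx => by
    linarith [(abs_le.1 (h x hx)).1]
  rw [abs_le]
  constructor <;> linarith

end Infimum

section CodingFunction

variable {g g' : ℝ → ℝ} {s t ε : ℝ}

lemma abs_mOf_sub_le (hg : ContinuousOn g (Icc (min s t) (max s t)))
    (hg' : ContinuousOn g' (Icc (min s t) (max s t)))
    (h : ∀ r ∈ Icc (min s t) (max s t), |g r - g' r| ≤ ε) :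
    |mOf g s t - mOf g' s t| ≤ ε :=
  abs_sInf_image_sub_le (nonempty_Icc.2 min_le_max)
    (isCompact_Icc.bddBelow_image hg) (isCompact_Icc.bddBelow_image hg') h

lemma abs_dOf_sub_le (hg : ContinuousOn g (Icc (min s t) (max s t)))
    (hg' : ContinuousOn g' (Icc (min s t) (max s t)))
    (h : ∀ r ∈ Icc (min s t) (max s t), |g r - g' r| ≤ ε) :
    |dOf g s t - dOf g' s t| ≤ 4 * ε := by
  have hs := abs_le.1 (h s ⟨min_le_left s t, le_max_left s t⟩)
  have ht := abs_le.1 (h t ⟨min_le_right s t, le_max_right s t⟩)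
  have hm := abs_le.1 (abs_mOf_sub_le hg hg' h)
  rw [dOf, dOf, abs_le]
  constructor <;> linarith

end CodingFunction

section GromovHausdorff

variable {X Y : Type} [MetricSpace X] [MetricSpace Y]

lemma pointedGHDist_le {Z : Type} [MetricSpace Z] {φ₁ : X → Z} {φ₂ : Y → Z}
    (h₁ : Isometry φ₁) (h₂ : Isometry φ₂) (x : X) (y : Y) :
    pointedGHDist X Y x y ≤
      max (hausdorffDist (range φ₁) (range φ₂)) (dist (φ₁ x) (φ₂ y)) := by
  refine csInf_le ⟨0, ?_⟩ ⟨Z, inferInstance, φ₁, φ₂, h₁, h₂, rfl⟩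
  rintro r ⟨W, _, ψ₁, ψ₂, -, -, rfl⟩
  exact le_max_of_le_left hausdorffDist_nonneg

variable {ι : Type*} {p : ι → X} {p' : ι → Y} {δ : ℝ}

lemma pointedGHDist_le_of_glue (hp : Function.Surjective p) (hp' : Function.Surjective p')
    (hδ : 0 < δ) (H : ∀ i j, |dist (p i) (p j) - dist (p' i) (p' j)| ≤ 2 * δ) (i₀ : ι) :
    pointedGHDist X Y (p i₀) (p' i₀) ≤ δ := by
  have : Nonempty ι := ⟨i₀⟩
  let : MetricSpace (X ⊕ Y) := glueMetricApprox p p' δ hδ H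
  have hglued (i : ι) : dist (Sum.inl (p i) : X ⊕ Y) (Sum.inr (p' i)) = δ :=
    glueDist_glued_points p p' δ i
  have hHausdorff : hausdorffDist (range (Sum.inl : X → X ⊕ Y)) (range Sum.inr) ≤ δ := by
    refine hausdorffDist_le_of_mem_dist hδ.le ?_ ?_
    · rintro _ ⟨x, rfl⟩
      obtain ⟨i, rfl⟩ := hp x
      exact ⟨_, mem_range_self (p' i), (hglued i).le⟩
    · rintro _ ⟨y, rfl⟩
      obtain ⟨i, rfl⟩ := hp' y
      exact ⟨_, mem_range_self (p i), (dist_comm _ _).trans_le (hglued i).le⟩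
  have hinl : Isometry (Sum.inl : X → X ⊕ Y) := .of_dist_eq fun _ _ => rfl
  have hinr : Isometry (Sum.inr : Y → X ⊕ Y) := .of_dist_eq fun _ _ => rfl
  exact (pointedGHDist_le hinl hinr _ _).trans (max_le hHausdorff (hglued i₀).le)

lemma pointedGHDist_le_of_abs_dist_sub_le (hp : Function.Surjective p)
    (hp' : Function.Surjective p') (H : ∀ i j, |dist (p i) (p j) - dist (p' i) (p' j)| ≤ 2 * δ)
    (i₀ : ι) : pointedGHDist X Y (p i₀) (p' i₀) ≤ δ := by
  have hδ : 0 ≤ δ := by simpa using H i₀ i₀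
  exact le_of_forall_pos_le_add fun η hη => pointedGHDist_le_of_glue hp hp' (by positivity)
    (fun i j => (H i j).trans (by linarith)) i₀

end GromovHausdorff

theorem ghDist_tree_le_general (g g' : ℝ → ℝ)
    (hcont : ContinuousOn g (Icc 0 1)) (hcont' : ContinuousOn g' (Icc 0 1))
    (T : Type) [MetricSpace T] (p : Icc (0 : ℝ) 1 → T)
    (hsurj : Function.Surjective p)
    (hdist : ∀ s t : Icc (0 : ℝ) 1, dist (p s) (p t) = dOf g s t)
    (T' : Type) [MetricSpace T'] (p' : Icc (0 : ℝ) 1 → T')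
    (hsurj' : Function.Surjective p')
    (hdist' : ∀ s t : Icc (0 : ℝ) 1, dist (p' s) (p' t) = dOf g' s t) :
    pointedGHDist T T' (p ⟨0, left_mem_Icc.mpr zero_le_one⟩)
        (p' ⟨0, left_mem_Icc.mpr zero_le_one⟩)
      ≤ 2 * ⨆ t : Icc (0 : ℝ) 1, |g t - g' t| := by
  set ε := ⨆ t : Icc (0 : ℝ) 1, |g t - g' t|
  have hbdd : BddAbove (range fun t : Icc (0 : ℝ) 1 => |g t - g' t|) :=
    (isCompact_range (hcont.sub hcont').abs.domRestrict).bddAbove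
  have hε (r : ℝ) (hr : r ∈ Icc (0 : ℝ) 1) : |g r - g' r| ≤ ε := le_ciSup hbdd ⟨r, hr⟩
  refine pointedGHDist_le_of_abs_dist_sub_le hsurj hsurj' (fun s t => ?_) _
  have hsub : Icc (min (s : ℝ) t) (max (s : ℝ) t) ⊆ Icc 0 1 :=
    Icc_subset_Icc (le_min s.2.1 t.2.1) (max_le s.2.2 t.2.2)
  rw [hdist, hdist']
  linarith [abs_dOf_sub_le (hcont.mono hsub) (hcont'.mono hsub) fun r hr => hε r (hsub hr)]

/-- Let `g, g' : [0,1] → [0,∞)` be continuous, vanishing at `0` and `1` and not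
identically zero. Then the (pointed) Gromov-Hausdorff distance between the coded real
trees `T_g` and `T_{g'}` (represented by metric spaces `T, T'` with root `p 0`, `p' 0`)
is at most `2 sup_{t ∈ [0,1]} |g t - g' t|`. -/
theorem ghDist_tree_le (g g' : ℝ → ℝ)
    (hcont : ContinuousOn g (Icc 0 1)) (hcont' : ContinuousOn g' (Icc 0 1))
    (hpos : ∀ t ∈ Icc (0 : ℝ) 1, 0 ≤ g t) (hpos' : ∀ t ∈ Icc (0 : ℝ) 1, 0 ≤ g' t)
    (h0 : g 0 = 0) (h1 : g 1 = 0) (h0' : g' 0 = 0) (h1' : g' 1 = 0)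
    (hne : ∃ t ∈ Icc (0 : ℝ) 1, g t ≠ 0) (hne' : ∃ t ∈ Icc (0 : ℝ) 1, g' t ≠ 0)
    (T : Type) [MetricSpace T] (p : Icc (0 : ℝ) 1 → T)
    (hsurj : Function.Surjective p)
    (hdist : ∀ s t : Icc (0 : ℝ) 1, dist (p s) (p t) = dOf g s t)
    (T' : Type) [MetricSpace T'] (p' : Icc (0 : ℝ) 1 → T')
    (hsurj' : Function.Surjective p')
    (hdist' : ∀ s t : Icc (0 : ℝ) 1, dist (p' s) (p' t) = dOf g' s t) :
    pointedGHDist T T' (p ⟨0, left_mem_Icc.mpr zero_le_one⟩)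
        (p' ⟨0, left_mem_Icc.mpr zero_le_one⟩)
      ≤ 2 * ⨆ t : Icc (0 : ℝ) 1, |g t - g' t| :=
  ghDist_tree_le_general g g' hcont hcont' T p hsurj hdist T' p' hsurj' hdist'
end

section
/- In the Cori–Vauquelin–Schaeffer construction from a labeled tree (τ, ℓ) with n edges, for every vertex v of the resulting quadrangulation q one has d_q(v, v_*) = ℓ(v) − min ℓ + 1, where d_q is the graph distance in q, v_* is the extra distinguished vertex with label ℓ(v_*) = min ℓ − 1, and min ℓ = min_{u∈τ} ℓ(u). -/
/-!
Give `v_*` the label `min ℓ - 1`. Every edge of `q` joins a corner to its successor, so labels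
change by exactly one along edges and `d_q(v, v_*) ≥ ℓ(v) - ℓ(v_*)`. Conversely every corner has
a successor one label lower: since the contour is periodic and visits a vertex of minimal label
infinitely often, a discrete intermediate value argument finds the next corner with label
`ℓ(e) - 1`, and a corner of minimal label is joined to `v_*`. Following successors is therefore a
path to `v_*` of length exactly `ℓ(v) - ℓ(v_*)`.
-/

open scoped Classical

namespace SimpleGraph

variable {V : Type*} {G : SimpleGraph V} {f : V → ℤ}

theorem Walk.abs_sub_le_length (hf : ∀ x y, G.Adj x y → |f x - f y| ≤ 1) {u v : V}
    (w : G.Walk u v) : |f u - f v| ≤ w.length := by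
  induction w with
  | nil => simp
  | @cons u v w h p ih =>
    rw [length_cons, Nat.cast_succ]
    linarith [abs_sub_le (f u) (f v) (f w), hf u v h]

theorem dist_eq_sub_of_forall_exists_adj_eq_sub_one {b : V}
    (hf : ∀ x y, G.Adj x y → |f x - f y| ≤ 1)
    (hdesc : ∀ v, v ≠ b → ∃ w, G.Adj v w ∧ f w = f v - 1)
    (hmin : ∀ v, f b ≤ f v) (v : V) : (G.dist v b : ℤ) = f v - f b := by
  have hwalk : ∀ k : ℕ, ∀ v, f v - f b = k → ∃ w : G.Walk v b, w.length = k := by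
    intro k
    induction k with
    | zero =>
      intro v hv
      by_cases hvb : v = b
      · subst hvb
        exact ⟨.nil, rfl⟩
      · obtain ⟨w, -, hw⟩ := hdesc v hvb
        push_cast at hv
        linarith [hmin w]
    | succ k ih =>
      intro v hv
      have hvb : v ≠ b := by rintro rfl; push_cast at hv; omega
      obtain ⟨w, hvw, hw⟩ := hdesc v hvb
      obtain ⟨p, hp⟩ := ih w (by push_cast at hv; omega)
      exact ⟨.cons hvw p, by rw [Walk.length_cons, hp]⟩
  obtain ⟨p, hp⟩ := hwalk (f v - f b).toNat v (Int.toNat_of_nonneg (sub_nonneg.2 (hmin v))).symm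
  obtain ⟨q, hq⟩ := Reachable.exists_walk_length_eq_dist ⟨p⟩
  have hupper : G.dist v b ≤ (f v - f b).toNat := hp ▸ dist_le p
  have hlower := q.abs_sub_le_length hf
  rw [hq, abs_of_nonneg (sub_nonneg.2 (hmin v))] at hlower
  have := Int.toNat_of_nonneg (sub_nonneg.2 (hmin v))
  omega

end SimpleGraph

theorem Int.exists_eq_of_abs_sub_le_one {f : ℕ → ℤ} (hf : ∀ i, |f (i + 1) - f i| ≤ 1)
    {i m : ℕ} (him : i ≤ m) {T : ℤ} (hi : T ≤ f i) (hm : f m ≤ T) :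
    ∃ j, i ≤ j ∧ j ≤ m ∧ f j = T := by
  induction m, him using Nat.le_induction with
  | base => exact ⟨i, le_rfl, le_rfl, le_antisymm hm hi⟩
  | succ m him ih =>
    by_cases hmT : f m ≤ T
    · obtain ⟨j, hij, hjm, hj⟩ := ih hmT
      exact ⟨j, hij, hjm.trans m.le_succ, hj⟩
    · have := abs_le.1 (hf m)
      exact ⟨m + 1, him.trans m.le_succ, le_rfl, by omega⟩

theorem Int.exists_gt_eq_sub_one {f : ℕ → ℤ} (hf : ∀ i, |f (i + 1) - f i| ≤ 1) {i : ℕ}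
    (hdrop : ∃ m, i < m ∧ f m < f i) : ∃ j, i < j ∧ f j = f i - 1 := by
  obtain ⟨m, him, hm⟩ := hdrop
  obtain ⟨j, hij, -, hj⟩ := Int.exists_eq_of_abs_sub_le_one hf him (T := f i - 1)
    (by linarith [abs_le.1 (hf i)]) (by omega)
  exact ⟨j, hij, hj⟩

section Corners

variable {α : Type*} {c : ℕ → α} {ℓ : α → ℤ} {M : ℤ}

noncomputable def cornerSucc (c : ℕ → α) (ℓ : α → ℤ) (i : ℕ) : Option α :=
  if _ : ∃ j, i < j ∧ ℓ (c j) = ℓ (c i) - 1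
  then some (c (sInf {j | i < j ∧ ℓ (c j) = ℓ (c i) - 1}))
  else none

noncomputable def cornerGraph (c : ℕ → α) (ℓ : α → ℤ) : SimpleGraph (Option α) :=
  SimpleGraph.fromRel fun x y => ∃ i, x = some (c i) ∧ y = cornerSucc c ℓ i

theorem exists_gt_label_eq_sub_one {n : ℕ} (hper : Function.Periodic c (2 * n))
    (hstep : ∀ i, |ℓ (c (i + 1)) - ℓ (c i)| ≤ 1) {k : ℕ} (hk : k < 2 * n) {i : ℕ}
    (hi : ℓ (c k) < ℓ (c i)) : ∃ j, i < j ∧ ℓ (c j) = ℓ (c i) - 1 := by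
  refine Int.exists_gt_eq_sub_one (f := fun j => ℓ (c j)) hstep ⟨k + (i + 1) * (2 * n), ?_, ?_⟩
  · nlinarith
  · simpa only [show c (k + (i + 1) * (2 * n)) = c k from hper.nat_mul (i + 1) k] using hi

theorem elim_cornerSucc (hmin : ∀ a, M ≤ ℓ a)
    (hdesc : ∀ i, M < ℓ (c i) → ∃ j, i < j ∧ ℓ (c j) = ℓ (c i) - 1) (i : ℕ) :
    (cornerSucc c ℓ i).elim (M - 1) ℓ = ℓ (c i) - 1 := by
  unfold cornerSucc
  split_ifs with h
  · exact (Nat.sInf_mem h).2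
  · have : ℓ (c i) = M := le_antisymm (not_lt.1 fun hlt => h (hdesc i hlt)) (hmin _)
    simp [this]

theorem cornerGraph_adj_cornerSucc
    (hsucc : ∀ i, (cornerSucc c ℓ i).elim (M - 1) ℓ = ℓ (c i) - 1) (i : ℕ) :
    (cornerGraph c ℓ).Adj (some (c i)) (cornerSucc c ℓ i) := by
  refine SimpleGraph.fromRel_adj _ _ _ |>.2 ⟨fun h => ?_, .inl ⟨i, rfl, rfl⟩⟩
  have := hsucc i
  rw [← h] at this
  simp only [Option.elim_some] at this
  omega

theorem abs_sub_le_one_of_cornerGraph_adj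
    (hsucc : ∀ i, (cornerSucc c ℓ i).elim (M - 1) ℓ = ℓ (c i) - 1) {x y : Option α}
    (hxy : (cornerGraph c ℓ).Adj x y) : |x.elim (M - 1) ℓ - y.elim (M - 1) ℓ| ≤ 1 := by
  rcases (SimpleGraph.fromRel_adj _ _ _).1 hxy |>.2 with ⟨i, rfl, rfl⟩ | ⟨i, rfl, rfl⟩ <;>
    simp [hsucc]

end Corners

/-- `c i` is the vertex of `τ` holding the `i`-th corner of the contour, extended
`2n`-periodically; `none` is `v_*`. -/
theorem cvs_distance_to_base_general
    {α : Type} [Fintype α] [Nonempty α]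
    (n : ℕ) (c : ℕ → α) (ℓ : α → ℤ)
    (hper : ∀ i, c (i + 2 * n) = c i)
    (hsurj : ∀ a : α, ∃ i < 2 * n, c i = a)
    (hstep : ∀ i, |ℓ (c (i + 1)) - ℓ (c i)| ≤ 1)
    (Q : SimpleGraph (Option α))
    (hQ : Q = SimpleGraph.fromRel (fun x y => ∃ i : ℕ,
      x = some (c i) ∧
      y = (if h : ∃ j, i < j ∧ ℓ (c j) = ℓ (c i) - 1
        then some (c (sInf {j | i < j ∧ ℓ (c j) = ℓ (c i) - 1}))
        else none)))
    (M : ℤ) (hM : M = Finset.univ.inf' Finset.univ_nonempty ℓ) :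
    ∀ v : Option α, (Q.dist v none : ℤ) = v.elim (M - 1) ℓ - M + 1 := by
  have hQ : Q = cornerGraph c ℓ := hQ
  have hmin : ∀ a, M ≤ ℓ a := fun a => hM ▸ Finset.inf'_le _ (Finset.mem_univ a)
  obtain ⟨a₀, -, ha₀⟩ := Finset.exists_mem_eq_inf' Finset.univ_nonempty ℓ
  obtain ⟨k, hk, rfl⟩ := hsurj a₀
  have hsucc : ∀ i, (cornerSucc c ℓ i).elim (M - 1) ℓ = ℓ (c i) - 1 :=
    elim_cornerSucc hmin fun i hi => exists_gt_label_eq_sub_one hper hstep hk (by omega)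
  intro v
  subst hQ
  rw [SimpleGraph.dist_eq_sub_of_forall_exists_adj_eq_sub_one
    (fun x y => abs_sub_le_one_of_cornerGraph_adj hsucc) _ _ v]
  · simp only [Option.elim_none]; ring
  · rintro (_ | a) hv
    · exact (hv rfl).elim
    · obtain ⟨i, -, rfl⟩ := hsurj a
      exact ⟨_, cornerGraph_adj_cornerSucc hsucc i, hsucc i⟩
  · rintro (_ | a)
    · exact le_rfl
    · simp only [Option.elim_none, Option.elim_some]
      linarith [hmin a]

/-- Labels in the Cori-Vauquelin-Schaeffer bijection measure distances to the
distinguished vertex. The labeled tree `(τ, ℓ)` with `n` edges is presented through its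
contour exploration: `c i` is the vertex of `τ` holding the `i`-th corner (the sequence
of corners being extended `2n`-periodically), every vertex holds some corner, and labels
change by at most `1` along the contour. The quadrangulation `q` has vertex set
`τ ∪ {v_*}` (encoded as `Option α`, `none` being `v_*`), with an edge joining each
corner to its successor — the first later corner with label one less — or to `v_*` when
no such corner exists. Then for every vertex `v` of `q`,
`d_q(v, v_*) = ℓ(v) - min ℓ + 1`, where `ℓ(v_*) = min ℓ - 1`. -/
theorem cvs_distance_to_base
    {α : Type} [Fintype α] [DecidableEq α] [Nonempty α]
    (n : ℕ) (hn : 1 ≤ n) (c : ℕ → α) (ℓ : α → ℤ)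
    (hper : ∀ i, c (i + 2 * n) = c i)
    (hsurj : ∀ a : α, ∃ i < 2 * n, c i = a)
    (hstep : ∀ i, |ℓ (c (i + 1)) - ℓ (c i)| ≤ 1)
    (Q : SimpleGraph (Option α))
    (hQ : Q = SimpleGraph.fromRel (fun x y => ∃ i : ℕ,
      x = some (c i) ∧
      y = (if h : ∃ j, i < j ∧ ℓ (c j) = ℓ (c i) - 1
        then some (c (sInf {j | i < j ∧ ℓ (c j) = ℓ (c i) - 1}))
        else none)))
    (M : ℤ) (hM : M = Finset.univ.inf' Finset.univ_nonempty ℓ) :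
    ∀ v : Option α, (Q.dist v none : ℤ) = v.elim (M - 1) ℓ - M + 1 :=
  cvs_distance_to_base_general n c ℓ hper hsurj hstep Q hQ M hM
end

section
/- Upper bound for distances in the CVS quadrangulation: with (q, v_*) obtained from a labeled tree (τ, ℓ) by the CVS bijection, for any two vertices u, v of q distinct from v_*, and any corners e, e' of τ with e^− = u and (e')^− = v, one has d_q(u, v) ≤ ℓ(u) + ℓ(v) − 2·min_{e'' ∈ [e, e']} ℓ(e'') + 2, where [e, e'] is the set of corners visited between e and e' in cyclic contour order around τ. -/
open scoped Classical

/-!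
Because labels go down by at most one per step of the contour, the successor chain started at
a corner `k` passes, for every `t < ℓ(k)`, through the first later corner with label `t` (or
through `v_*` if no later corner has label `t`), and gets there in at most `ℓ(k) - t` steps.
If `m` is the minimal label on `[i, j]`, no corner of `(i, j]` has label `m - 1`, so the chains
from `i` and from `j` meet at the same vertex for `t = m - 1`.
-/

namespace CVS

variable {α : Type*} {f : ℕ → ℤ} {k : ℕ} {t : ℤ}

def hitSet (f : ℕ → ℤ) (k : ℕ) (t : ℤ) : Set ℕ := {x | k < x ∧ f x = t}

noncomputable def hitVertex (c : ℕ → α) (f : ℕ → ℤ) (k : ℕ) (t : ℤ) : Option α :=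
  if (hitSet f k t).Nonempty then some (c (sInf (hitSet f k t))) else none

theorem exists_eq_of_lt_of_le (hdown : ∀ i, f i - 1 ≤ f (i + 1)) {b : ℕ} (hkb : k < b)
    (ht : t < f k) (hb : f b ≤ t) : ∃ x, k < x ∧ x ≤ b ∧ f x = t := by
  induction b, hkb using Nat.le_induction with
  | base => exact ⟨k + 1, k.lt_succ_self, le_rfl, by linarith [hdown k]⟩
  | succ b hkb ih =>
    by_cases hfb : f b ≤ t
    · obtain ⟨x, hkx, hxb, hx⟩ := ih hfb
      exact ⟨x, hkx, hxb.trans b.le_succ, hx⟩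
    · exact ⟨b + 1, by omega, le_rfl, by linarith [hdown b]⟩

theorem hitSet_sInf_sub_one (hdown : ∀ i, f i - 1 ≤ f (i + 1)) (ht : t < f k)
    (hne : (hitSet f k t).Nonempty) :
    hitSet f (sInf (hitSet f k t)) (t - 1) = hitSet f k (t - 1) := by
  obtain ⟨hkp, hp⟩ := Nat.sInf_mem hne
  ext x
  refine ⟨fun ⟨hpx, hx⟩ => ⟨hkp.trans hpx, hx⟩, fun ⟨hkx, hx⟩ => ⟨?_, hx⟩⟩
  obtain ⟨y, hky, hyx, hy⟩ := exists_eq_of_lt_of_le hdown hkx ht (by omega)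
  have hpy : sInf (hitSet f k t) ≤ y := Nat.sInf_le ⟨hky, hy⟩
  have hpx : sInf (hitSet f k t) ≠ x := fun h => by rw [h] at hp; omega
  omega

theorem not_nonempty_hitSet_sub_one (hdown : ∀ i, f i - 1 ≤ f (i + 1)) (ht : t < f k)
    (hempty : ¬(hitSet f k t).Nonempty) : ¬(hitSet f k (t - 1)).Nonempty := by
  rintro ⟨x, hkx, hx⟩
  obtain ⟨y, hky, -, hy⟩ := exists_eq_of_lt_of_le hdown hkx ht (by omega)
  exact hempty ⟨y, hky, hy⟩

theorem hitSet_eq_hitSet_of_forall_lt {i j : ℕ} (hij : i ≤ j) (hlt : ∀ x, i < x → x ≤ j → t < f x) :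
    hitSet f i t = hitSet f j t := by
  ext x
  refine ⟨fun ⟨hix, hx⟩ => ⟨?_, hx⟩, fun ⟨hjx, hx⟩ => ⟨by omega, hx⟩⟩
  by_contra! hxj
  exact (hlt x hix hxj).ne' hx

variable {c : ℕ → α} {G : SimpleGraph (Option α)}

theorem exists_walk_hitVertex (hdown : ∀ i, f i - 1 ≤ f (i + 1))
    (hsucc : ∀ k, G.Adj (some (c k)) (hitVertex c f k (f k - 1))) (k : ℕ) (t : ℤ)
    (ht : t < f k) :
    ∃ w : G.Walk (some (c k)) (hitVertex c f k t), (w.length : ℤ) ≤ f k - t := by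
  induction t, (Int.le_sub_one_of_lt ht) using Int.leInductionDown with
  | base => exact ⟨(hsucc k).toWalk, by simp⟩
  | pred t htk ih =>
    have ht : t < f k := by omega
    obtain ⟨w, hw⟩ := ih ht
    by_cases hne : (hitSet f k t).Nonempty
    · have hp : f (sInf (hitSet f k t)) = t := (Nat.sInf_mem hne).2
      have hadj : G.Adj (some (c (sInf (hitSet f k t)))) (hitVertex c f k (t - 1)) := by
        simpa only [hitVertex, hp, hitSet_sInf_sub_one hdown ht hne] using
          hsucc (sInf (hitSet f k t))
      have hv : hitVertex c f k t = some (c (sInf (hitSet f k t))) := if_pos hne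
      refine ⟨(w.copy rfl hv).concat hadj, ?_⟩
      rw [SimpleGraph.Walk.length_concat, SimpleGraph.Walk.length_copy]
      push_cast
      omega
    · have hv : hitVertex c f k t = hitVertex c f k (t - 1) := by
        rw [hitVertex, hitVertex, if_neg hne, if_neg (not_nonempty_hitSet_sub_one hdown ht hne)]
      exact ⟨w.copy rfl hv, by rw [SimpleGraph.Walk.length_copy]; omega⟩

theorem dist_le_of_forall_lt (hdown : ∀ i, f i - 1 ≤ f (i + 1))
    (hsucc : ∀ k, G.Adj (some (c k)) (hitVertex c f k (f k - 1))) {i j : ℕ} (hij : i ≤ j)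
    (hlt : ∀ x, i ≤ x → x ≤ j → t < f x) :
    (G.dist (some (c i)) (some (c j)) : ℤ) ≤ (f i - t) + (f j - t) := by
  obtain ⟨w₁, hw₁⟩ := exists_walk_hitVertex hdown hsucc i t (hlt i le_rfl hij)
  obtain ⟨w₂, hw₂⟩ := exists_walk_hitVertex hdown hsucc j t (hlt j hij le_rfl)
  have hv : hitVertex c f i t = hitVertex c f j t := by
    rw [hitVertex, hitVertex, hitSet_eq_hitSet_of_forall_lt hij fun x hix => hlt x hix.le]
  have hdist := G.dist_le ((w₁.copy rfl hv).append w₂.reverse)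
  rw [SimpleGraph.Walk.length_append, SimpleGraph.Walk.length_copy,
    SimpleGraph.Walk.length_reverse] at hdist
  omega

theorem adj_hitVertex_of_eq_fromRel {ℓ : α → ℤ} {Q : SimpleGraph (Option α)}
    (hQ : Q = SimpleGraph.fromRel fun x y => ∃ i : ℕ,
      x = some (c i) ∧ y = hitVertex c (fun m => ℓ (c m)) i (ℓ (c i) - 1)) (k : ℕ) :
    Q.Adj (some (c k)) (hitVertex c (fun m => ℓ (c m)) k (ℓ (c k) - 1)) := by
  rw [hQ, SimpleGraph.fromRel_adj]
  refine ⟨fun h => ?_, Or.inl ⟨k, rfl, rfl⟩⟩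
  unfold hitVertex at h
  split_ifs at h with hne
  have hp : ℓ (c (sInf (hitSet (fun m => ℓ (c m)) k (ℓ (c k) - 1)))) = ℓ (c k) - 1 :=
    (Nat.sInf_mem hne).2
  rw [← Option.some_injective _ h] at hp
  omega

end CVS

/-- The vertex `v_*` of `q` is `none`; for `i ≤ j`, the corners of `[c i, c j]` are the
`c m` with `m ∈ Icc i j`. -/
theorem cvs_distance_upper_bound_general
    {α : Type}
    (c : ℕ → α) (ℓ : α → ℤ)
    (hstep : ∀ i, |ℓ (c (i + 1)) - ℓ (c i)| ≤ 1)
    (Q : SimpleGraph (Option α))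
    (hQ : Q = SimpleGraph.fromRel (fun x y => ∃ i : ℕ,
      x = some (c i) ∧
      y = (if h : ∃ j, i < j ∧ ℓ (c j) = ℓ (c i) - 1
        then some (c (sInf {j | i < j ∧ ℓ (c j) = ℓ (c i) - 1}))
        else none))) :
    ∀ i j : ℕ, (hij : i ≤ j) →
      (Q.dist (some (c i)) (some (c j)) : ℤ)
        ≤ ℓ (c i) + ℓ (c j)
          - 2 * (Finset.Icc i j).inf' (Finset.nonempty_Icc.mpr hij) (fun m => ℓ (c m))
          + 2 := by
  intro i j hij
  have hdown : ∀ m, ℓ (c m) - 1 ≤ ℓ (c (m + 1)) := fun m => by linarith [(abs_le.mp (hstep m)).1]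
  have hmin : ∀ x, i ≤ x → x ≤ j →
      (Finset.Icc i j).inf' (Finset.nonempty_Icc.mpr hij) (fun m => ℓ (c m)) - 1 < ℓ (c x) :=
    fun x hix hxj => Int.sub_one_lt_of_le (Finset.inf'_le _ (Finset.mem_Icc.mpr ⟨hix, hxj⟩))
  have := CVS.dist_le_of_forall_lt hdown (CVS.adj_hitVertex_of_eq_fromRel hQ) hij hmin
  linarith

/-- Upper bound for distances in the CVS quadrangulation. The labeled tree `(τ, ℓ)` with
`n` edges is presented through its contour exploration `c` (extended `2n`-periodically);
the quadrangulation `q` (with vertex set `τ ∪ {v_*}`, encoded as `Option α`) joins each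
corner to its successor, the first later corner with label one less (or to `v_*` if none
exists). For corners `e = c i` and `e' = c j` with `i ≤ j` (so that the corners of
`[e, e']` are those with indices in `[i, j]`),
`d_q(e⁻, e'⁻) ≤ ℓ(e⁻) + ℓ(e'⁻) - 2 min_{e'' ∈ [e,e']} ℓ(e'') + 2`. -/
theorem cvs_distance_upper_bound
    {α : Type} [Fintype α] [DecidableEq α] [Nonempty α]
    (n : ℕ) (hn : 1 ≤ n) (c : ℕ → α) (ℓ : α → ℤ)
    (hper : ∀ i, c (i + 2 * n) = c i)
    (hsurj : ∀ a : α, ∃ i < 2 * n, c i = a)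
    (hstep : ∀ i, |ℓ (c (i + 1)) - ℓ (c i)| ≤ 1)
    (Q : SimpleGraph (Option α))
    (hQ : Q = SimpleGraph.fromRel (fun x y => ∃ i : ℕ,
      x = some (c i) ∧
      y = (if h : ∃ j, i < j ∧ ℓ (c j) = ℓ (c i) - 1
        then some (c (sInf {j | i < j ∧ ℓ (c j) = ℓ (c i) - 1}))
        else none))) :
    ∀ i j : ℕ, (hij : i ≤ j) →
      (Q.dist (some (c i)) (some (c j)) : ℤ)
        ≤ ℓ (c i) + ℓ (c j)
          - 2 * (Finset.Icc i j).inf' (Finset.nonempty_Icc.mpr hij) (fun m => ℓ (c m))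
          + 2 :=
  cvs_distance_upper_bound_general c ℓ hstep Q hQ
end
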